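/- arXiv:2310.10241 — 6 statements merged into one kernel-verified Lean document; each statement's English description precedes it below -/
import Mathlib

section
/- Let (d_i)_{i≥0} be a sequence of nonnegative integers such that d_0 = 1 and d_{i+1} ≤ d_i^⟨i⟩ for all i ≥ 1, and set n = d_1. Then there exists a lexideal L in S = K[X_1,...,X_n] such that, writing R = S/L = ⊕_{i≥0} R_i for the graded quotient, dim_K R_i = d_i for all i ≥ 0. -/
/-- `macaulay h a` is the Macaulay operator `a ↦ a^⟨h⟩`, computed via the greedy
construction of the `h`-binomial representation of `a`: writing
`a = C(a_h,h) + C(a_{h-1},h-1) + ⋯ + C(a_1,1)` with `a_h > a_{h-1} > ⋯ > a_1 ≥ 0`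
(where `a_h` is the largest integer with `C(a_h,h) ≤ a`, and so on), one sets
`a^⟨h⟩ = C(a_h+1,h+1) + C(a_{h-1}+1,h) + ⋯ + C(a_1+1,2)`, and `0^⟨h⟩ = 0`. -/
def macaulay : ℕ → ℕ → ℕ
  | 0, _ => 0
  | h + 1, a =>
    if a = 0 then 0
    else
      let m := Nat.findGreatest (fun k => Nat.choose k (h + 1) ≤ a) (a + h + 1)
      Nat.choose (m + 1) (h + 2) + macaulay h (a - Nat.choose m (h + 1))


lemma macaulay_zero (h : ℕ) : macaulay h 0 = 0 := by cases h <;> simp [macaulay]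

lemma chooseBig (a h : ℕ) : a < Nat.choose (a + h + 1) (h + 1) := by
  induction a with
  | zero => simp [Nat.choose_self]
  | succ a ih =>
    have h1 : 0 < Nat.choose (a + h + 1) h := Nat.choose_pos (by omega)
    have h2 : Nat.choose (a + h + 2) (h + 1) = Nat.choose (a + h + 1) h + Nat.choose (a + h + 1) (h + 1) :=
      Nat.choose_succ_succ' (a + h + 1) h
    have h3 : a + 1 + h + 1 = a + h + 2 := by omega
    rw [h3]
    omega

lemma greedy_eq {h a m : ℕ} (h1 : Nat.choose m (h + 1) ≤ a)
    (h2 : a < Nat.choose (m + 1) (h + 1)) :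
    Nat.findGreatest (fun k => Nat.choose k (h + 1) ≤ a) (a + h + 1) = m := by
  rw [Nat.findGreatest_eq_iff]
  have hm : m ≤ a + h := by
    by_contra hc
    push_neg at hc
    have := chooseBig a h
    have := Nat.choose_le_choose (h + 1) (show a + h + 1 ≤ m by omega)
    omega
  refine ⟨by omega, fun _ => h1, fun k hk _ hPk => ?_⟩
  have := Nat.choose_le_choose (h + 1) (show m + 1 ≤ k by omega)
  omega

lemma macaulay_step {h a m : ℕ} (ha : 0 < a) (h1 : Nat.choose m (h + 1) ≤ a)
    (h2 : a < Nat.choose (m + 1) (h + 1)) :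
    macaulay (h + 1) a = Nat.choose (m + 1) (h + 2) + macaulay h (a - Nat.choose m (h + 1)) := by
  rw [show macaulay (h+1) a = if a = 0 then 0 else
      (Nat.choose ((Nat.findGreatest (fun k => Nat.choose k (h + 1) ≤ a) (a + h + 1)) + 1) (h + 2)
        + macaulay h (a - Nat.choose (Nat.findGreatest (fun k => Nat.choose k (h + 1) ≤ a) (a + h + 1)) (h + 1))) from rfl]
  rw [if_neg (by omega), greedy_eq h1 h2]

lemma greedy_exists (h a : ℕ) : ∃ m : ℕ, Nat.choose m (h + 1) ≤ a ∧
    a < Nat.choose (m + 1) (h + 1) := by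
  induction a with
  | zero => exact ⟨h, by simp [Nat.choose_eq_zero_of_lt], by simp⟩
  | succ a ih =>
    obtain ⟨m, hm1, hm2⟩ := ih
    rcases Nat.lt_or_ge (a + 1) (Nat.choose (m + 1) (h + 1)) with h' | h'
    · exact ⟨m, by omega, h'⟩
    · refine ⟨m + 1, by omega, ?_⟩
      have hp : Nat.choose (m + 1) (h + 1) ≤ a + 1 := h'
      have : a + 1 = Nat.choose (m + 1) (h + 1) := by omega
      rw [this, show m + 1 + 1 = m + 2 from rfl]
      have e1 : Nat.choose (m + 2) (h + 1) = Nat.choose (m + 1) h + Nat.choose (m + 1) (h + 1) :=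
        Nat.choose_succ_succ' (m + 1) h
      have e2 : 0 < Nat.choose (m + 1) h := Nat.choose_pos (by
        by_contra hc
        push_neg at hc
        have : Nat.choose (m + 1) (h + 1) = 0 := Nat.choose_eq_zero_of_lt (by omega)
        omega)
      omega

lemma macaulay_UB : ∀ h a M : ℕ, a < Nat.choose M h → macaulay h a + 1 ≤ Nat.choose (M + 1) (h + 1) := by
  intro h
  induction h with
  | zero =>
    intro a M hlt
    simp only [Nat.choose_zero_right] at hlt
    interval_cases a
    simp [macaulay_zero]
  | succ h ih =>
    intro a M hlt
    have hM : h + 1 ≤ M := by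
      by_contra hc
      push_neg at hc
      rw [Nat.choose_eq_zero_of_lt hc] at hlt
      omega
    have ee : Nat.choose (M + 1) (h + 1 + 1) = Nat.choose (M + 1) (h + 2) := rfl
    rcases Nat.eq_zero_or_pos a with h0 | h0
    · rw [h0, macaulay_zero]
      have : 0 < Nat.choose (M + 1) (h + 2) := Nat.choose_pos (by omega)
      omega
    obtain ⟨m, hm1, hm2⟩ := greedy_exists (h := h) a
    rw [macaulay_step h0 hm1 hm2]
    have hrem : a - Nat.choose m (h + 1) < Nat.choose m h := by
      have := Nat.choose_succ_succ' m h
      omega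
    have := ih (a - Nat.choose m (h + 1)) m hrem
    have hmM : m + 1 ≤ M := by
      by_contra hc
      push_neg at hc
      have := Nat.choose_le_choose (h + 1) (show M ≤ m by omega)
      omega
    have e1 : Nat.choose (m + 2) (h + 2) = Nat.choose (m + 1) (h + 1) + Nat.choose (m + 1) (h + 2) :=
      Nat.choose_succ_succ' (m + 1) (h + 1)
    have := Nat.choose_le_choose (h + 2) (show m + 2 ≤ M + 1 by omega)
    omega

lemma macaulay_mono : ∀ h a b : ℕ, a ≤ b → macaulay h a ≤ macaulay h b := by
  intro h
  induction h with
  | zero => intro a b _; simp [macaulay]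
  | succ h ih =>
    intro a b hab
    rcases Nat.eq_zero_or_pos a with h0 | h0
    · rw [h0, macaulay_zero]; omega
    have hb : 0 < b := by omega
    obtain ⟨m, hm1, hm2⟩ := greedy_exists (h := h) a
    obtain ⟨m', hm1', hm2'⟩ := greedy_exists (h := h) b
    rw [macaulay_step h0 hm1 hm2, macaulay_step hb hm1' hm2']
    rcases Nat.lt_trichotomy m m' with hlt | heq | hgt
    · have h1 := macaulay_UB (h + 1) a (m + 1) hm2
      rw [macaulay_step h0 hm1 hm2] at h1
      have ee : Nat.choose (m + 1 + 1) (h + 1 + 1) = Nat.choose (m + 2) (h + 2) := rfl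
      have := Nat.choose_le_choose (h + 2) (show m + 2 ≤ m' + 1 by omega)
      omega
    · subst heq
      have := ih (a - Nat.choose m (h + 1)) (b - Nat.choose m (h + 1)) (by omega)
      omega
    · exfalso
      have := Nat.choose_le_choose (h + 1) (show m' + 1 ≤ m by omega)
      omega

section
lemma hockey (n j : ℕ) :
    ∑ k ∈ Finset.range (j + 1), Nat.choose (n + k) k = Nat.choose (n + 1 + j) j := by
  induction j with
  | zero => simp
  | succ j ih =>
    rw [Finset.sum_range_succ, ih]
    have h2 : Nat.choose (n + 1 + j + 1) (j + 1)
        = Nat.choose (n + 1 + j) j + Nat.choose (n + 1 + j) (j + 1) := Nat.choose_succ_succ' _ j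
    rw [show n + 1 + (j + 1) = n + 1 + j + 1 from rfl, h2,
      show n + (j + 1) = n + 1 + j by omega]

lemma hockey' {n : ℕ} (hn : 1 ≤ n) (j : ℕ) :
    ∑ k ∈ Finset.range (j + 1), Nat.choose (n + k - 1) k = Nat.choose (n + j) j := by
  obtain ⟨n', rfl⟩ : ∃ n', n = n' + 1 := ⟨n - 1, by omega⟩
  rw [← hockey n' j]
  exact Finset.sum_congr rfl fun k _ => by rw [show n' + 1 + k - 1 = n' + k by omega]

lemma partial_bound {n t j r : ℕ} (hn : 1 ≤ n) (ht : t ≤ j)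
    (hr : r < Nat.choose (n + (j - t) - 1) (j - t)) :
    ∑ s ∈ Finset.range t, Nat.choose (n + (j - s) - 1) (j - s) + r < Nat.choose (n + j) j := by
  have key : ∑ s ∈ Finset.range (t + 1), Nat.choose (n + (j - s) - 1) (j - s)
      ≤ ∑ k ∈ Finset.range (j + 1), Nat.choose (n + k - 1) k := by
    have hinj : ∀ x ∈ Finset.range (t + 1), ∀ y ∈ Finset.range (t + 1), j - x = j - y → x = y := by
      intro x hx y hy hxy
      have := Finset.mem_range.mp hx; have := Finset.mem_range.mp hy; omega
    have himg : ∑ k ∈ (Finset.range (t + 1)).image (fun s => j - s), Nat.choose (n + k - 1) k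
        = ∑ s ∈ Finset.range (t + 1), Nat.choose (n + (j - s) - 1) (j - s) :=
      Finset.sum_image hinj
    rw [← himg]
    apply Finset.sum_le_sum_of_subset
    intro k hk
    simp only [Finset.mem_image, Finset.mem_range] at hk ⊢
    omega
  rw [Finset.sum_range_succ, hockey' hn j] at key
  omega

lemma macaulay_sum_le {n : ℕ} (hn : 1 ≤ n) :
    ∀ t i r : ℕ, t ≤ i → r < Nat.choose (n + (i - t) - 1) (i - t) →
    macaulay i (∑ s ∈ Finset.range t, Nat.choose (n + (i - s) - 1) (i - s) + r)
      ≤ ∑ s ∈ Finset.range t, Nat.choose (n + (i + 1 - s) - 1) (i + 1 - s) + macaulay (i - t) r := by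
  intro t
  induction t with
  | zero => intro i r _ _; simp
  | succ t ih =>
    intro i r ht hr
    obtain ⟨i', rfl⟩ : ∃ i', i = i' + 1 := ⟨i - 1, by omega⟩
    have ht' : t ≤ i' := by omega
    have hr' : r < Nat.choose (n + (i' - t) - 1) (i' - t) := by
      rw [show i' - t = i' + 1 - (t + 1) by omega]; exact hr
    -- rewrite LHS sum
    have e1 : ∑ s ∈ Finset.range (t + 1), Nat.choose (n + (i' + 1 - s) - 1) (i' + 1 - s)
        = ∑ s ∈ Finset.range t, Nat.choose (n + (i' - s) - 1) (i' - s) + Nat.choose (n + i') (i' + 1) := by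
      rw [Finset.sum_range_succ']
      have h01 : ∑ s ∈ Finset.range t, Nat.choose (n + (i' + 1 - (s + 1)) - 1) (i' + 1 - (s + 1))
          = ∑ s ∈ Finset.range t, Nat.choose (n + (i' - s) - 1) (i' - s) :=
        Finset.sum_congr rfl fun s _ => by rw [show i' + 1 - (s + 1) = i' - s by omega]
      rw [h01, show n + (i' + 1 - 0) - 1 = n + i' by omega, show i' + 1 - 0 = i' + 1 by omega]
    set rest := ∑ s ∈ Finset.range t, Nat.choose (n + (i' - s) - 1) (i' - s) + r with hrest
    have hrb : rest < Nat.choose (n + i') i' := partial_bound hn ht' hr'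
    have hpas : Nat.choose (n + i' + 1) (i' + 1)
        = Nat.choose (n + i') i' + Nat.choose (n + i') (i' + 1) := Nat.choose_succ_succ' _ i'
    have hpos : 0 < Nat.choose (n + i') (i' + 1) := Nat.choose_pos (by omega)
    have harg : ∑ s ∈ Finset.range (t + 1), Nat.choose (n + (i' + 1 - s) - 1) (i' + 1 - s) + r
        = Nat.choose (n + i') (i' + 1) + rest := by rw [e1, hrest]; omega
    rw [harg]
    have hstep := macaulay_step (h := i') (a := Nat.choose (n + i') (i' + 1) + rest) (m := n + i')
      (by omega) (by omega) (by omega)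
    have hcan : Nat.choose (n + i') (i' + 1) + rest - Nat.choose (n + i') (i' + 1) = rest := by omega
    rw [hstep, hcan]
    have ihr := ih i' r ht' hr'
    rw [← hrest] at ihr
    -- rewrite RHS sum
    have e2 : ∑ s ∈ Finset.range (t + 1), Nat.choose (n + (i' + 1 + 1 - s) - 1) (i' + 1 + 1 - s)
        = ∑ s ∈ Finset.range t, Nat.choose (n + (i' + 1 - s) - 1) (i' + 1 - s)
          + Nat.choose (n + i' + 1) (i' + 2) := by
      rw [Finset.sum_range_succ']
      have h01 : ∑ s ∈ Finset.range t, Nat.choose (n + (i' + 1 + 1 - (s + 1)) - 1) (i' + 1 + 1 - (s + 1))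
          = ∑ s ∈ Finset.range t, Nat.choose (n + (i' + 1 - s) - 1) (i' + 1 - s) :=
        Finset.sum_congr rfl fun s _ => by rw [show i' + 1 + 1 - (s + 1) = i' + 1 - s by omega]
      rw [h01, show n + (i' + 1 + 1 - 0) - 1 = n + i' + 1 by omega,
        show i' + 1 + 1 - 0 = i' + 2 by omega]
    rw [e2, show i' + 1 - (t + 1) = i' - t by omega]
    omega

end


open Finset Finset.Nat
open scoped Classical

section Comb

lemma lex_lt_iff {n : ℕ} {x y : Fin n → ℕ} :
    toLex x < toLex y ↔ ∃ i, (∀ j, j < i → x j = y j) ∧ x i < y i := Iff.rfl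

lemma lex_trichot {n : ℕ} (x y : Fin n → ℕ) :
    toLex x < toLex y ∨ x = y ∨ toLex y < toLex x := by
  have := @Pi.isTrichotomous_lex (Fin n) (fun _ => ℕ) (· < ·) (fun {_} => (· < ·))
    (fun _ => inferInstance) wellFounded_lt
  by_cases h1 : toLex x < toLex y
  · exact Or.inl h1
  by_cases h2 : toLex y < toLex x
  · exact Or.inr (Or.inr h2)
  exact Or.inr (Or.inl (this.trichotomous x y h1 h2))

def fcons {n : ℕ} (s : ℕ) (v : Fin n → ℕ) : Fin (n + 1) → ℕ := Fin.cons s v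

lemma fcons_injective {n : ℕ} (s : ℕ) : Function.Injective (fcons (n := n) s) := by
  intro a b h
  have := congrArg Fin.tail h
  simpa [fcons, Fin.tail_cons] using this

lemma lex_cons_iff {n : ℕ} {w u : Fin (n + 1) → ℕ} :
    toLex w < toLex u ↔ w 0 < u 0 ∨ (w 0 = u 0 ∧ toLex (Fin.tail w) < toLex (Fin.tail u)) := by
  constructor
  · rintro ⟨i, hj, hi⟩
    rcases Fin.eq_zero_or_eq_succ i with rfl | ⟨k, rfl⟩
    · exact Or.inl hi
    · refine Or.inr ⟨hj 0 (Fin.succ_pos k), ⟨k, fun j hjk => hj j.succ ?_, hi⟩⟩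
      exact Fin.succ_lt_succ_iff.mpr hjk
  · rintro (h | ⟨h0, k, hj, hk⟩)
    · exact ⟨0, fun j hj => absurd hj (by simp), h⟩
    · refine ⟨k.succ, fun j hjk => ?_, hk⟩
      rcases Fin.eq_zero_or_eq_succ j with rfl | ⟨m, rfl⟩
      · exact h0
      · exact hj m (Fin.succ_lt_succ_iff.mp hjk)

lemma AT_succ (n i : ℕ) : antidiagonalTuple (n + 1) i
    = (Finset.range (i + 1)).biUnion
        (fun s => (antidiagonalTuple n (i - s)).image (fcons s)) := by
  ext w
  simp only [mem_antidiagonalTuple, Finset.mem_biUnion, Finset.mem_range, Finset.mem_image]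
  constructor
  · intro hs
    have h0 : w 0 ≤ i := by
      rw [← hs, Fin.sum_univ_succ]; omega
    refine ⟨w 0, by omega, Fin.tail w, ?_, Fin.cons_self_tail w⟩
    rw [Fin.sum_univ_succ] at hs
    simp only [Fin.tail]
    omega
  · rintro ⟨s, hsi, v, hv, rfl⟩
    rw [Fin.sum_univ_succ]
    simp only [fcons, Fin.cons_zero, Fin.cons_succ]
    omega

lemma card_AT : ∀ n i : ℕ, (antidiagonalTuple n i).card = Nat.choose (n + i - 1) i := by
  intro n
  induction n with
  | zero =>
    intro i
    cases i with
    | zero => simp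
    | succ i => simp [Nat.choose_eq_zero_of_lt (show i < i + 1 by omega)]
  | succ n ih =>
    intro i
    rcases Nat.eq_zero_or_pos n with rfl | hn
    · simp [antidiagonalTuple_one]
    rw [AT_succ, Finset.card_biUnion]
    · have e1 : ∀ s ∈ Finset.range (i + 1),
          ((antidiagonalTuple n (i - s)).image (fcons s)).card
            = Nat.choose (n + (i - s) - 1) (i - s) := by
        intro s _
        rw [Finset.card_image_of_injective _ (fcons_injective s), ih]
      rw [Finset.sum_congr rfl e1]
      have e2 : ∑ s ∈ Finset.range (i + 1), Nat.choose (n + (i - s) - 1) (i - s)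
          = ∑ k ∈ Finset.range (i + 1), Nat.choose (n + k - 1) k := by
        have := Finset.sum_range_reflect (fun k => Nat.choose (n + k - 1) k) (i + 1)
        rw [← this]
        exact Finset.sum_congr rfl fun s hs => by
          rw [show i + 1 - 1 - s = i - s by omega]
      rw [e2, hockey' hn i, show n + 1 + i - 1 = n + i by omega]
    · intro x _ y _ hxy
      apply Finset.disjoint_left.mpr
      intro w hw hw'
      simp only [Finset.mem_image] at hw hw'
      obtain ⟨v, _, rfl⟩ := hw
      obtain ⟨v', _, hv'⟩ := hw'
      exact hxy (by rw [show x = fcons x v 0 from rfl, ← hv']; rfl)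

noncomputable def cnt (n i : ℕ) (u : Fin n → ℕ) : ℕ :=
  ((antidiagonalTuple n i).filter (fun w => toLex w < toLex u)).card

lemma cnt_lt_card {n i : ℕ} {u : Fin n → ℕ} (hu : u ∈ antidiagonalTuple n i) :
    cnt n i u < (antidiagonalTuple n i).card := by
  have hsub : (antidiagonalTuple n i).filter (fun w => toLex w < toLex u)
      ⊆ (antidiagonalTuple n i).erase u := by
    intro w hw
    rw [Finset.mem_filter] at hw
    exact Finset.mem_erase.mpr ⟨fun h => absurd (h ▸ hw.2) (lt_irrefl _), hw.1⟩
  have := Finset.card_le_card hsub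
  have hc := Finset.card_erase_of_mem hu
  have hpos : 0 < (antidiagonalTuple n i).card := Finset.card_pos.mpr ⟨u, hu⟩
  unfold cnt
  omega

lemma cnt_strict_mono {n i : ℕ} {u v : Fin n → ℕ} (hu : u ∈ antidiagonalTuple n i)
    (huv : toLex u < toLex v) : cnt n i u < cnt n i v := by
  apply Finset.card_lt_card
  rw [Finset.ssubset_iff_of_subset]
  · exact ⟨u, Finset.mem_filter.mpr ⟨hu, huv⟩,
      fun h => absurd (Finset.mem_filter.mp h).2 (lt_irrefl _)⟩
  · intro w hw
    rw [Finset.mem_filter] at hw ⊢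
    exact ⟨hw.1, hw.2.trans huv⟩

lemma cnt_injOn {n i : ℕ} {u v : Fin n → ℕ} (hu : u ∈ antidiagonalTuple n i)
    (hv : v ∈ antidiagonalTuple n i) (h : cnt n i u = cnt n i v) : u = v := by
  rcases lex_trichot u v with hlt | heq | hgt
  · exact absurd h (Nat.ne_of_lt (cnt_strict_mono hu hlt))
  · exact heq
  · exact absurd h.symm (Nat.ne_of_lt (cnt_strict_mono hv hgt))

lemma cnt_mono {n i : ℕ} {u v : Fin n → ℕ} (hv : v ∈ antidiagonalTuple n i)
    (huv : cnt n i u ≤ cnt n i v) : u = v ∨ toLex u < toLex v := by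
  rcases lex_trichot u v with hlt | heq | hgt
  · exact Or.inr hlt
  · exact Or.inl heq
  · exact absurd huv (by simpa using cnt_strict_mono hv hgt)

lemma cnt_le_of_lex_le {n i : ℕ} {u v : Fin n → ℕ} (hu : u ∈ antidiagonalTuple n i)
    (h : u = v ∨ toLex u < toLex v) : cnt n i u ≤ cnt n i v := by
  rcases h with rfl | hlt
  · exact le_refl _
  · exact (cnt_strict_mono hu hlt).le

end Comb

section Decomp

lemma cnt_decomp (n i : ℕ) (u : Fin (n + 1) → ℕ) (hu : ∑ j, u j = i) :
    cnt (n + 1) i u = ∑ s ∈ Finset.range (u 0), (antidiagonalTuple n (i - s)).card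
      + cnt n (i - u 0) (Fin.tail u) := by
  have h0le : u 0 ≤ i := by rw [Fin.sum_univ_succ] at hu; omega
  set G := (Finset.range (u 0)).biUnion (fun s => (antidiagonalTuple n (i - s)).image (fcons s))
    with hG
  set H := ((antidiagonalTuple n (i - u 0)).filter
      (fun w => toLex w < toLex (Fin.tail u))).image (fcons (u 0)) with hH
  have hGmem : ∀ w : Fin (n + 1) → ℕ, w ∈ G ↔ w 0 < u 0 ∧ ∑ j, w j = i := by
    intro w
    rw [hG]
    simp only [Finset.mem_biUnion, Finset.mem_range, Finset.mem_image, mem_antidiagonalTuple]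
    constructor
    · rintro ⟨s, hs, v, hv, rfl⟩
      have h1 : fcons s v 0 = s := rfl
      have h2 : ∑ j, fcons s v j = s + ∑ j, v j := by
        rw [show (fcons s v : Fin (n+1) → ℕ) = Fin.cons s v from rfl, Fin.sum_univ_succ]
        simp [Fin.cons_succ]
      rw [h1, h2, hv]
      omega
    · rintro ⟨hlt, hsum⟩
      refine ⟨w 0, hlt, Fin.tail w, ?_, ?_⟩
      · rw [Fin.sum_univ_succ] at hsum
        simp only [Fin.tail]
        omega
      · exact Fin.cons_self_tail w
  have hHmem : ∀ w : Fin (n + 1) → ℕ, w ∈ H ↔ w 0 = u 0 ∧ (∑ j, w j = i)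
      ∧ toLex (Fin.tail w) < toLex (Fin.tail u) := by
    intro w
    rw [hH]
    simp only [Finset.mem_image, Finset.mem_filter, mem_antidiagonalTuple]
    constructor
    · rintro ⟨v, ⟨hv, hvlt⟩, rfl⟩
      have h1 : fcons (u 0) v 0 = u 0 := rfl
      have h2 : ∑ j, fcons (u 0) v j = u 0 + ∑ j, v j := by
        rw [show (fcons (u 0) v : Fin (n+1) → ℕ) = Fin.cons (u 0) v from rfl, Fin.sum_univ_succ]
        simp [Fin.cons_succ]
      have h3 : Fin.tail (fcons (u 0) v) = v := Fin.tail_cons _ _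
      rw [h1, h2, h3, hv]
      exact ⟨rfl, by omega, hvlt⟩
    · rintro ⟨heq, hsum, hlt⟩
      refine ⟨Fin.tail w, ⟨?_, hlt⟩, ?_⟩
      · rw [Fin.sum_univ_succ] at hsum
        simp only [Fin.tail]
        omega
      · rw [← heq]
        exact Fin.cons_self_tail w
  have hF : (antidiagonalTuple (n + 1) i).filter (fun w => toLex w < toLex u) = G ∪ H := by
    ext w
    rw [Finset.mem_union, hGmem, hHmem, Finset.mem_filter, mem_antidiagonalTuple, lex_cons_iff]
    constructor
    · rintro ⟨hsum, h | ⟨h1, h2⟩⟩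
      · exact Or.inl ⟨h, hsum⟩
      · exact Or.inr ⟨h1, hsum, h2⟩
    · rintro (⟨h1, h2⟩ | ⟨h1, h2, h3⟩)
      · exact ⟨h2, Or.inl h1⟩
      · exact ⟨h2, Or.inr ⟨h1, h3⟩⟩
  have hdisj : Disjoint G H := by
    rw [Finset.disjoint_left]
    intro w hwG hwH
    rw [hGmem] at hwG
    rw [hHmem] at hwH
    omega
  have hcardG : G.card = ∑ s ∈ Finset.range (u 0), (antidiagonalTuple n (i - s)).card := by
    rw [hG, Finset.card_biUnion]
    · exact Finset.sum_congr rfl fun s _ =>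
        Finset.card_image_of_injective _ (fcons_injective s)
    · intro x _ y _ hxy
      apply Finset.disjoint_left.mpr
      intro w hw hw'
      simp only [Finset.mem_image] at hw hw'
      obtain ⟨v, _, rfl⟩ := hw
      obtain ⟨v', _, hv'⟩ := hw'
      exact hxy (by rw [show x = fcons x v 0 from rfl, ← hv']; rfl)
  have hcardH : H.card = cnt n (i - u 0) (Fin.tail u) :=
    Finset.card_image_of_injective _ (fcons_injective (u 0))
  rw [cnt, hF, Finset.card_union_of_disjoint hdisj, hcardG, hcardH]

def lastinc {n : ℕ} (u : Fin (n + 1) → ℕ) : Fin (n + 1) → ℕ :=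
  Function.update u (Fin.last n) (u (Fin.last n) + 1)

lemma sum_lastinc {n : ℕ} (u : Fin (n + 1) → ℕ) : ∑ j, lastinc u j = (∑ j, u j) + 1 := by
  rw [lastinc, Finset.sum_update_of_mem (Finset.mem_univ _)]
  have := Finset.sum_erase_add Finset.univ u (Finset.mem_univ (Fin.last n))
  rw [← Finset.sdiff_singleton_eq_erase] at this
  omega

lemma lastinc_zero {n : ℕ} (u : Fin (n + 2) → ℕ) : lastinc u 0 = u 0 := by
  rw [lastinc, Function.update_of_ne]
  intro h
  have := Fin.val_eq_val (0 : Fin (n+2)) (Fin.last (n+1))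
  simp [Fin.ext_iff] at h

lemma tail_lastinc {n : ℕ} (u : Fin (n + 2) → ℕ) :
    Fin.tail (lastinc u) = lastinc (Fin.tail u) := by
  funext j
  simp only [Fin.tail, lastinc, Function.update_apply]
  have hiff : (j.succ = Fin.last (n + 1)) ↔ (j = Fin.last n) := by
    rw [← Fin.succ_last]
    exact ⟨fun h => Fin.succ_injective _ h, fun h => by rw [h]⟩
  by_cases hj : j = Fin.last n
  · subst hj
    rw [if_pos (hiff.mpr rfl), if_pos rfl, Fin.succ_last]
  · rw [if_neg (fun h => hj (hiff.mp h)), if_neg hj]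

lemma cnt_macaulay (n : ℕ) : ∀ i : ℕ, ∀ u : Fin (n + 1) → ℕ, (∑ j, u j = i) →
    macaulay i (cnt (n + 1) i u) ≤ cnt (n + 1) (i + 1) (lastinc u) := by
  induction n with
  | zero =>
    intro i u hu
    have h0 : cnt 1 i u = 0 := by
      rw [cnt, Finset.card_eq_zero, Finset.filter_eq_empty_iff]
      intro w hw
      rw [mem_antidiagonalTuple] at hw
      have hw' : w = u := by
        funext j
        rw [Subsingleton.elim j 0]
        have e1 : ∑ j, w j = w 0 := Fin.sum_univ_one w
        have e2 : ∑ j, u j = u 0 := Fin.sum_univ_one u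
        omega
      rw [hw']
      exact lt_irrefl _
    rw [h0, macaulay_zero]
    exact Nat.zero_le _
  | succ n ih =>
    intro i u hu
    have h0le : u 0 ≤ i := by rw [Fin.sum_univ_succ] at hu; omega
    have htail : ∑ j, Fin.tail u j = i - u 0 := by
      rw [Fin.sum_univ_succ] at hu
      simp only [Fin.tail]
      omega
    have hu' : ∑ j, lastinc u j = i + 1 := by rw [sum_lastinc, hu]
    have e1 := cnt_decomp (n + 1) i u hu
    have e2 := cnt_decomp (n + 1) (i + 1) (lastinc u) hu'
    rw [lastinc_zero, tail_lastinc] at e2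
    have ihh := ih (i - u 0) (Fin.tail u) htail
    have hmem : Fin.tail u ∈ antidiagonalTuple (n + 1) (i - u 0) :=
      mem_antidiagonalTuple.mpr htail
    have hr : cnt (n + 1) (i - u 0) (Fin.tail u) < (antidiagonalTuple (n + 1) (i - u 0)).card :=
      cnt_lt_card hmem
    rw [card_AT] at hr
    have hsum1 : ∑ s ∈ Finset.range (u 0), (antidiagonalTuple (n + 1) (i - s)).card
        = ∑ s ∈ Finset.range (u 0), Nat.choose (n + 1 + (i - s) - 1) (i - s) :=
      Finset.sum_congr rfl fun s _ => card_AT (n + 1) (i - s)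
    have hsum2 : ∑ s ∈ Finset.range (u 0), (antidiagonalTuple (n + 1) (i + 1 - s)).card
        = ∑ s ∈ Finset.range (u 0), Nat.choose (n + 1 + (i + 1 - s) - 1) (i + 1 - s) :=
      Finset.sum_congr rfl fun s _ => card_AT (n + 1) (i + 1 - s)
    rw [hsum1] at e1
    rw [hsum2] at e2
    have hmain := macaulay_sum_le (n := n + 1) (by omega) (u 0) i
      (cnt (n + 1) (i - u 0) (Fin.tail u)) h0le hr
    have hidx : i - u 0 + 1 = i + 1 - u 0 := by omega
    rw [hidx] at ihh
    rw [e1, e2]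
    calc macaulay i (∑ s ∈ Finset.range (u 0), Nat.choose (n + 1 + (i - s) - 1) (i - s)
          + cnt (n + 1) (i - u 0) (Fin.tail u))
        ≤ ∑ s ∈ Finset.range (u 0), Nat.choose (n + 1 + (i + 1 - s) - 1) (i + 1 - s)
          + macaulay (i - u 0) (cnt (n + 1) (i - u 0) (Fin.tail u)) := hmain
      _ ≤ _ := by omega

end Decomp

section Extra

lemma AT_image_cnt (n i : ℕ) :
    (antidiagonalTuple n i).image (cnt n i) = Finset.range (antidiagonalTuple n i).card := by
  apply Finset.eq_of_subset_of_card_le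
  · intro k hk
    simp only [Finset.mem_image] at hk
    obtain ⟨u, hu, rfl⟩ := hk
    exact Finset.mem_range.mpr (cnt_lt_card hu)
  · rw [Finset.card_range, Finset.card_image_of_injOn (fun u hu v hv h => cnt_injOn hu hv h)]

lemma card_filter_cnt_lt (n i D : ℕ) (hD : D ≤ (antidiagonalTuple n i).card) :
    ((antidiagonalTuple n i).filter (fun v => cnt n i v < D)).card = D := by
  have hinj : Set.InjOn (cnt n i)
      ((antidiagonalTuple n i).filter (fun v => cnt n i v < D) : Finset _) := by
    intro u hu v hv h
    simp only [Finset.coe_filter, Set.mem_setOf_eq] at hu hv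
    exact cnt_injOn hu.1 hv.1 h
  have h1 : ((antidiagonalTuple n i).filter (fun v => cnt n i v < D)).card
      = (((antidiagonalTuple n i).filter (fun v => cnt n i v < D)).image (cnt n i)).card :=
    (Finset.card_image_of_injOn hinj).symm
  have h2 : ((antidiagonalTuple n i).filter (fun v => cnt n i v < D)).image (cnt n i)
      = ((antidiagonalTuple n i).image (cnt n i)).filter (fun k => k < D) :=
    by rw [Finset.filter_image]
  rw [h1, h2, AT_image_cnt]
  have h3 : (Finset.range (antidiagonalTuple n i).card).filter (fun k => k < D)
      = Finset.range D := by
    ext k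
    simp only [Finset.mem_filter, Finset.mem_range]
    omega
  rw [h3, Finset.card_range]

lemma macaulay_choose {i : ℕ} (hi : 1 ≤ i) (n : ℕ) :
    macaulay i (Nat.choose (n + i - 1) i) = Nat.choose (n + i) (i + 1) := by
  obtain ⟨h, rfl⟩ : ∃ h, i = h + 1 := ⟨i - 1, by omega⟩
  rcases Nat.eq_zero_or_pos n with rfl | hn
  · rw [show 0 + (h + 1) - 1 = h by omega, Nat.choose_eq_zero_of_lt (by omega), macaulay_zero,
      show 0 + (h + 1) = h + 1 by omega]
    exact (Nat.choose_eq_zero_of_lt (by omega)).symm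
  · have e0 : n + (h + 1) - 1 = n + h := by omega
    have hpos : 0 < Nat.choose (n + h) (h + 1) := Nat.choose_pos (by omega)
    have hpas : Nat.choose (n + h + 1) (h + 1)
        = Nat.choose (n + h) h + Nat.choose (n + h) (h + 1) := Nat.choose_succ_succ' _ _
    have hpos2 : 0 < Nat.choose (n + h) h := Nat.choose_pos (by omega)
    have := macaulay_step (h := h) (a := Nat.choose (n + h) (h + 1)) (m := n + h)
      hpos (le_refl _) (by omega)
    rw [e0, this, Nat.sub_self, macaulay_zero, show n + (h + 1) = n + h + 1 by omega,
      show h + 1 + 1 = h + 2 from rfl, Nat.add_zero]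

end Extra

/-- The degree of a monomial, encoded as its exponent vector `σ : Fin n →₀ ℕ`
(so `σ` encodes `X_1^{σ 0} ⋯ X_n^{σ (n-1)}`). -/
def mdeg {n : ℕ} (σ : Fin n →₀ ℕ) : ℕ := ∑ j, σ j

/-- The strict graded lexicographic order on monomials (exponent vectors), for the
variable order `X_1 > ⋯ > X_n` (coordinate `0` corresponds to `X_1`): `u < v` iff
`deg u < deg v`, or the degrees are equal and at the first coordinate where `u, v`
differ, `u` has the smaller exponent. -/
def glexLt {n : ℕ} (u v : Fin n →₀ ℕ) : Prop :=
  mdeg u < mdeg v ∨ (mdeg u = mdeg v ∧ ∃ j : Fin n, u j < v j ∧ ∀ k, k < j → u k = v k)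

/-- The graded lexicographic order: `glexLe u v` means `u ≤ v`. -/
def glexLe {n : ℕ} (u v : Fin n →₀ ℕ) : Prop := u = v ∨ glexLt u v

/-- A lexsegment in degree `i`: a set of monomials of the form `{u ∈ M_i | u ≥ v}`
for some monomial `v` of degree `i`. -/
def IsLexSegment {n : ℕ} (i : ℕ) (C : Set (Fin n →₀ ℕ)) : Prop :=
  ∃ v : Fin n →₀ ℕ, mdeg v = i ∧ C = {u | mdeg u = i ∧ glexLe v u}

/-- A monomial ideal: an ideal generated by monomials. -/
def IsMonomialIdeal {K : Type*} [Field K] {n : ℕ} (J : Ideal (MvPolynomial (Fin n) K)) : Prop :=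
  ∃ T : Set (Fin n →₀ ℕ), J = Ideal.span ((fun σ => MvPolynomial.monomial σ (1 : K)) '' T)

/-- A lexideal: a monomial ideal `L` such that, for every `i ≥ 1` with `L ∩ M_i ≠ ∅`,
the set of degree-`i` monomials of `L` is a lexsegment. -/
def IsLexIdeal {K : Type*} [Field K] {n : ℕ} (L : Ideal (MvPolynomial (Fin n) K)) : Prop :=
  IsMonomialIdeal L ∧ ∀ i : ℕ, 1 ≤ i →
    ({σ : Fin n →₀ ℕ | mdeg σ = i ∧ MvPolynomial.monomial σ (1 : K) ∈ L}).Nonempty →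
    IsLexSegment i {σ : Fin n →₀ ℕ | mdeg σ = i ∧ MvPolynomial.monomial σ (1 : K) ∈ L}

/-- `quotDim K L i` is the Hilbert function of the graded quotient `R = S/L` in degree `i`:
the `K`-dimension of the image of the space `S_i` of homogeneous polynomials of degree `i`
under the quotient map `S → S/L`. -/
noncomputable def quotDim (K : Type*) [Field K] {n : ℕ} (L : Ideal (MvPolynomial (Fin n) K))
    (i : ℕ) : ℕ :=
  Module.finrank K ↥(Submodule.map (Ideal.Quotient.mkₐ K L).toLinearMap
    (MvPolynomial.homogeneousSubmodule (Fin n) K i))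



open Finset Finset.Nat MvPolynomial
open scoped Classical

section Alg

lemma lex_lt_iff' {n : ℕ} {x y : Fin n → ℕ} :
    toLex x < toLex y ↔ ∃ i, (∀ j, j < i → x j = y j) ∧ x i < y i := Iff.rfl

noncomputable def toFs {n : ℕ} (v : Fin n → ℕ) : Fin n →₀ ℕ := Finsupp.equivFunOnFinite.symm v

lemma toFs_apply {n : ℕ} (v : Fin n → ℕ) : ⇑(toFs v) = v := rfl

lemma toFs_coe {n : ℕ} (σ : Fin n →₀ ℕ) : toFs ⇑σ = σ := Finsupp.equivFunOnFinite.symm_apply_apply σ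

lemma toFs_inj {n : ℕ} : Function.Injective (toFs (n := n)) := Finsupp.equivFunOnFinite.symm.injective

lemma mdeg_toFs {n : ℕ} (v : Fin n → ℕ) : mdeg (toFs v) = ∑ j, v j := rfl

lemma coe_mem_AT {n : ℕ} (σ : Fin n →₀ ℕ) : ⇑σ ∈ antidiagonalTuple n (mdeg σ) :=
  mem_antidiagonalTuple.mpr rfl

lemma mdeg_degree {n : ℕ} (σ : Fin n →₀ ℕ) : Finsupp.degree σ = mdeg σ :=
  Finset.sum_subset (Finset.subset_univ _) (fun j _ h => Finsupp.notMem_support_iff.mp h)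

lemma glex_lex {n : ℕ} {u w : Fin n →₀ ℕ} :
    (∃ j, u j < w j ∧ ∀ k, k < j → u k = w k) ↔ toLex ⇑u < toLex ⇑w := by
  rw [lex_lt_iff']
  exact ⟨fun ⟨j, h1, h2⟩ => ⟨j, h2, h1⟩, fun ⟨j, h1, h2⟩ => ⟨j, h2, h1⟩⟩

/-- the generating set of the lex ideal -/
def TS (d : ℕ → ℕ) (n : ℕ) : Set (Fin n →₀ ℕ) :=
  {σ | 1 ≤ mdeg σ ∧ d (mdeg σ) ≤ cnt n (mdeg σ) ⇑σ}

lemma T_closed {n : ℕ} {d : ℕ → ℕ} (hd : ∀ i, 1 ≤ i → d (i + 1) ≤ macaulay i (d i)) :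
    ∀ m : ℕ, ∀ τ σ : Fin n →₀ ℕ, τ ∈ TS d n → τ ≤ σ → mdeg σ = mdeg τ + m → σ ∈ TS d n := by
  intro m
  induction m with
  | zero =>
    intro τ σ hτ hle hdeg
    have hle' : ∀ j, τ j ≤ σ j := Finsupp.le_def.mp hle
    have : σ = τ := by
      ext j
      by_contra hne
      have hlt : τ j < σ j := lt_of_le_of_ne (hle' j) (Ne.symm hne)
      have : ∑ k, τ k < ∑ k, σ k :=
        Finset.sum_lt_sum (fun k _ => hle' k) ⟨j, Finset.mem_univ j, hlt⟩
      have e1 : mdeg τ = ∑ k, τ k := rfl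
      have e2 : mdeg σ = ∑ k, σ k := rfl
      omega
    rwa [this]
  | succ m ih =>
    intro τ σ hτ hle hdeg
    have hle' : ∀ j, τ j ≤ σ j := Finsupp.le_def.mp hle
    have hj : ∃ j, τ j < σ j := by
      by_contra hc
      push_neg at hc
      have : ∀ j, τ j = σ j := fun j => le_antisymm (hle' j) (hc j)
      have : ∑ k, (τ : Fin n → ℕ) k = ∑ k, (σ : Fin n → ℕ) k :=
        Finset.sum_congr rfl fun k _ => this k
      have e1 : mdeg τ = ∑ k, τ k := rfl
      have e2 : mdeg σ = ∑ k, σ k := rfl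
      omega
    obtain ⟨j, hj⟩ := hj
    have hsle : Finsupp.single j 1 ≤ σ := Finsupp.single_le_iff.mpr (by omega)
    set σ' := σ - Finsupp.single j 1 with hσ'
    have hadd : σ' + Finsupp.single j 1 = σ := tsub_add_cancel_of_le hsle
    have happ : ∀ k, σ k = σ' k + (Finsupp.single j 1) k := by
      intro k
      conv_lhs => rw [← hadd]
      rw [Finsupp.add_apply]
    have hsingle : ∀ k, (Finsupp.single j 1 : Fin n →₀ ℕ) k = if j = k then 1 else 0 :=
      fun k => Finsupp.single_apply
    have hmdegσ' : mdeg σ = mdeg σ' + 1 := by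
      have e1 : mdeg σ = ∑ k, σ k := rfl
      have e2 : mdeg σ' = ∑ k, σ' k := rfl
      have e3 : ∑ k, σ k = ∑ k, (σ' k + (Finsupp.single j 1) k) :=
        Finset.sum_congr rfl fun k _ => happ k
      have e4 : ∑ k, (σ' k + (Finsupp.single j 1) k)
          = ∑ k, σ' k + ∑ k, (Finsupp.single j 1) k := Finset.sum_add_distrib
      have e5 : ∑ k, ((Finsupp.single j 1 : Fin n →₀ ℕ)) k = 1 := by
        rw [Finset.sum_congr rfl fun k _ => hsingle k, Finset.sum_ite_eq]
        simp
      omega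
    have hτσ' : τ ≤ σ' := by
      rw [Finsupp.le_def]
      intro k
      have h1 := happ k
      have h2 := hsingle k
      have h3 := hle' k
      by_cases hk : j = k
      · subst hk
        rw [if_pos rfl] at h2
        omega
      · rw [if_neg hk] at h2
        omega
    have hσ'T : σ' ∈ TS d n := ih τ σ' hτ hτσ' (by omega)
    obtain ⟨h1, h2⟩ := hσ'T
    -- now the step from σ' to σ = σ' + e_j
    obtain ⟨n', rfl⟩ : ∃ n', n = n' + 1 := ⟨n - 1, by have := j.2; omega⟩
    set i' := mdeg σ' with hi'
    have hsum' : ∑ k, (σ' : Fin (n' + 1) → ℕ) k = i' := rfl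
    have hlastmem : lastinc ⇑σ' ∈ antidiagonalTuple (n' + 1) (i' + 1) := by
      rw [mem_antidiagonalTuple, sum_lastinc, hsum']
    have hlexle : lastinc ⇑σ' = ⇑σ ∨ toLex (lastinc ⇑σ') < toLex ⇑σ := by
      by_cases hjl : j = Fin.last n'
      · left
        funext k
        rw [lastinc, Function.update_apply, happ k, hsingle k]
        subst hjl
        by_cases hk : k = Fin.last n'
        · subst hk
          rw [if_pos rfl, if_pos rfl]
        · rw [if_neg hk, if_neg (fun h : Fin.last n' = k => hk h.symm)]
          exact (Nat.add_zero _).symm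
      · right
        rw [lex_lt_iff']
        have hjlt : j < Fin.last n' := lt_of_le_of_ne (Fin.le_last j) hjl
        refine ⟨j, fun k hk => ?_, ?_⟩
        · have hkl : k ≠ Fin.last n' := ne_of_lt (lt_trans hk hjlt)
          rw [lastinc, Function.update_of_ne hkl, happ k, hsingle k,
            if_neg (fun h => (ne_of_lt hk) h.symm)]
          omega
        · rw [lastinc, Function.update_of_ne hjl, happ j, hsingle j, if_pos rfl]
          omega
    have hchain : d (i' + 1) ≤ cnt (n' + 1) (i' + 1) ⇑σ := by
      calc d (i' + 1) ≤ macaulay i' (d i') := hd i' h1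
        _ ≤ macaulay i' (cnt (n' + 1) i' ⇑σ') := macaulay_mono _ _ _ h2
        _ ≤ cnt (n' + 1) (i' + 1) (lastinc ⇑σ') := cnt_macaulay n' i' ⇑σ' hsum'
        _ ≤ cnt (n' + 1) (i' + 1) ⇑σ := cnt_le_of_lex_le hlastmem hlexle
    have hmd : mdeg σ = i' + 1 := by omega
    exact ⟨by omega, by rw [hmd]; exact hchain⟩

variable {K : Type*} [Field K]

lemma mem_L_iff {n : ℕ} {d : ℕ → ℕ} (hd : ∀ i, 1 ≤ i → d (i + 1) ≤ macaulay i (d i))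
    {p : MvPolynomial (Fin n) K} :
    p ∈ Ideal.span ((fun σ => monomial σ (1 : K)) '' TS d n)
      ↔ ∀ σ ∈ p.support, σ ∈ TS d n := by
  rw [mem_ideal_span_monomial_image]
  constructor
  · intro h σ hσ
    obtain ⟨τ, hτ, hle⟩ := h σ hσ
    have hmono : mdeg τ ≤ mdeg σ := Finset.sum_le_sum fun k _ => Finsupp.le_def.mp hle k
    exact T_closed hd (mdeg σ - mdeg τ) τ σ hτ hle (by omega)
  · intro h σ hσ
    exact ⟨σ, h σ hσ, le_refl σ⟩

lemma monomial_mem_L_iff {n : ℕ} {d : ℕ → ℕ} (hd : ∀ i, 1 ≤ i → d (i + 1) ≤ macaulay i (d i))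
    {σ : Fin n →₀ ℕ} :
    monomial σ (1 : K) ∈ Ideal.span ((fun σ => monomial σ (1 : K)) '' TS d n) ↔ σ ∈ TS d n := by
  rw [mem_L_iff hd]
  have hs : (monomial σ (1 : K)).support = {σ} := by
    rw [support_monomial, if_neg one_ne_zero]
  rw [hs]
  simp

end Alg

section Alg2
variable {K : Type*} [Field K]

set_option maxHeartbeats 1000000 in
lemma quotDim_TS {n : ℕ} {d : ℕ → ℕ} (hd : ∀ i, 1 ≤ i → d (i + 1) ≤ macaulay i (d i)) (i : ℕ) :
    quotDim K (Ideal.span ((fun σ => monomial σ (1 : K)) '' TS d n)) i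
      = ((antidiagonalTuple n i).filter (fun v => ¬(1 ≤ i ∧ d i ≤ cnt n i v))).card := by
  unfold quotDim
  set L := Ideal.span ((fun σ => monomial σ (1 : K)) '' TS d n) with hL
  set B := (antidiagonalTuple n i).filter (fun v => ¬(1 ≤ i ∧ d i ≤ cnt n i v)) with hB
  set φ : MvPolynomial (Fin n) K →ₗ[K] (MvPolynomial (Fin n) K ⧸ L) :=
    (Ideal.Quotient.mkₐ K L).toLinearMap with hφ
  have hBspec : ∀ v : Fin n → ℕ, v ∈ B ↔ (∑ j, v j = i) ∧ ¬(1 ≤ i ∧ d i ≤ cnt n i v) := by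
    intro v; rw [hB, Finset.mem_filter, mem_antidiagonalTuple]
  have hBnotT : ∀ v ∈ B, toFs v ∉ TS d n := by
    intro v hv hT
    rw [hBspec] at hv
    obtain ⟨h1, h2⟩ := hT
    rw [mdeg_toFs, hv.1] at h1 h2
    rw [toFs_apply] at h2
    exact hv.2 ⟨h1, h2⟩
  have hindep : LinearIndependent K (fun v : {x // x ∈ B} => φ (monomial (toFs ↑v) (1 : K))) := by
    rw [linearIndependent_iff']
    intro s g hsum v0 hv0
    by_contra hg
    set p : MvPolynomial (Fin n) K := ∑ v ∈ s, monomial (toFs ↑v) (g v) with hp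
    have hφp : φ p = 0 := by
      rw [hp, map_sum, ← hsum]
      exact Finset.sum_congr rfl fun v _ => by
        rw [← map_smul, smul_monomial, smul_eq_mul, mul_one]
    have hpL : p ∈ L := by
      rw [← Ideal.Quotient.eq_zero_iff_mem]
      exact hφp
    have hcoeff : coeff (toFs ↑v0) p = g v0 := by
      rw [hp, coeff_sum, Finset.sum_eq_single_of_mem v0 hv0]
      · rw [coeff_monomial, if_pos rfl]
      · intro v hv hne
        rw [coeff_monomial, if_neg (fun h => hne (Subtype.ext (toFs_inj h)))]
    have hsupp : toFs ↑v0 ∈ p.support := mem_support_iff.mpr (by rw [hcoeff]; exact hg)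
    exact hBnotT ↑v0 v0.2 ((mem_L_iff hd).mp hpL _ hsupp)
  have hspan : Submodule.map φ (homogeneousSubmodule (Fin n) K i)
      = Submodule.span K (Set.range (fun v : {x // x ∈ B} => φ (monomial (toFs ↑v) (1 : K)))) := by
    apply le_antisymm
    · intro x hx
      obtain ⟨p, hp, rfl⟩ := Submodule.mem_map.mp hx
      rw [mem_homogeneousSubmodule] at hp
      rw [← support_sum_monomial_coeff p, map_sum]
      apply Submodule.sum_mem
      intro σ hσ
      have hw : Finsupp.weight 1 σ = i := hp (mem_support_iff.mp hσ)
      have hdeg : mdeg σ = i := by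
        rw [← mdeg_degree σ, Finsupp.degree_eq_weight_one]
        exact hw
      have hmono : monomial σ (coeff σ p) = coeff σ p • monomial σ (1 : K) := by
        rw [smul_monomial, smul_eq_mul, mul_one]
      rw [hmono, map_smul]
      by_cases hT : σ ∈ TS d n
      · have h0 : φ (monomial σ (1 : K)) = 0 :=
          Ideal.Quotient.eq_zero_iff_mem.mpr (Ideal.subset_span ⟨σ, hT, rfl⟩)
        rw [h0, smul_zero]
        exact Submodule.zero_mem _
      · have hnot : ¬(1 ≤ i ∧ d i ≤ cnt n i ⇑σ) := by
          rw [← hdeg]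
          exact hT
        have hvB : ⇑σ ∈ B := (hBspec ⇑σ).mpr ⟨hdeg, hnot⟩
        apply Submodule.smul_mem
        apply Submodule.subset_span
        refine ⟨⟨⇑σ, hvB⟩, ?_⟩
        show φ (monomial (toFs ⇑σ) 1) = φ (monomial σ 1)
        rw [toFs_coe]
    · rw [Submodule.span_le]
      rintro x ⟨v, rfl⟩
      have hhom : monomial (toFs (↑v : Fin n → ℕ)) (1 : K) ∈ homogeneousSubmodule (Fin n) K i := by
        rw [mem_homogeneousSubmodule]
        apply isHomogeneous_monomial
        rw [mdeg_degree, mdeg_toFs]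
        exact ((hBspec ↑v).mp v.2).1
      exact Submodule.mem_map_of_mem hhom
  rw [hspan, finrank_span_eq_card hindep, Fintype.card_coe]

lemma card_B {n : ℕ} {d : ℕ → ℕ} (hd0 : d 0 = 1)
    (hF1 : ∀ i, d i ≤ Nat.choose (n + i - 1) i) (i : ℕ) :
    ((antidiagonalTuple n i).filter (fun v => ¬(1 ≤ i ∧ d i ≤ cnt n i v))).card = d i := by
  rcases Nat.eq_zero_or_pos i with rfl | hi
  · have : (antidiagonalTuple n 0).filter (fun v => ¬(1 ≤ 0 ∧ d 0 ≤ cnt n 0 v))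
        = antidiagonalTuple n 0 := Finset.filter_true_of_mem (fun v _ => by omega)
    rw [this, antidiagonalTuple_zero_right, Finset.card_singleton, hd0]
  · have hiff : ∀ v ∈ antidiagonalTuple n i,
        (¬(1 ≤ i ∧ d i ≤ cnt n i v)) ↔ cnt n i v < d i := by
      intro v _
      constructor
      · intro h
        rcases Nat.lt_or_ge (cnt n i v) (d i) with h' | h'
        · exact h'
        · exact absurd ⟨hi, h'⟩ h
      · intro h hc
        omega
    rw [Finset.filter_congr hiff]
    exact card_filter_cnt_lt n i (d i) (by rw [card_AT]; exact hF1 i)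

lemma d_le_card {n : ℕ} {d : ℕ → ℕ} (hd0 : d 0 = 1) (hd1 : d 1 = n)
    (hd : ∀ i, 1 ≤ i → d (i + 1) ≤ macaulay i (d i)) : ∀ i, d i ≤ Nat.choose (n + i - 1) i := by
  intro i
  induction i with
  | zero => simp [hd0]
  | succ i ih =>
    rcases Nat.eq_zero_or_pos i with rfl | hi
    · rw [hd1, show n + 1 - 1 = n by omega, Nat.choose_one_right]
    · calc d (i + 1) ≤ macaulay i (d i) := hd i hi
        _ ≤ macaulay i (Nat.choose (n + i - 1) i) := macaulay_mono _ _ _ ih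
        _ = Nat.choose (n + i) (i + 1) := macaulay_choose hi n
        _ = Nat.choose (n + (i + 1) - 1) (i + 1) := by rw [show n + (i + 1) - 1 = n + i by omega]

end Alg2


/-- Converse part of Macaulay's theorem, realized by lexideals. Let `(d_i)_{i≥0}` be a
sequence of nonnegative integers with `d_0 = 1` and `d_{i+1} ≤ d_i^⟨i⟩` for all `i ≥ 1`,
and set `n = d_1`. Then there exists a lexideal `L` in `S = K[X_1,…,X_n]` such that the
graded quotient `R = S/L` satisfies `dim_K R_i = d_i` for all `i ≥ 0`. -/
theorem stmt3 (K : Type*) [Field K] (d : ℕ → ℕ) (hd0 : d 0 = 1)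
    (hd : ∀ i : ℕ, 1 ≤ i → d (i + 1) ≤ macaulay i (d i)) :
    ∃ L : Ideal (MvPolynomial (Fin (d 1)) K), IsLexIdeal L ∧
      ∀ i : ℕ, quotDim K L i = d i := by

  classical
  set n := d 1 with hn
  refine ⟨Ideal.span ((fun σ => monomial σ (1 : K)) '' TS d n), ⟨⟨TS d n, rfl⟩, ?_⟩, ?_⟩
  · -- lex segment property
    intro i hi hne
    set L := Ideal.span ((fun σ => monomial σ (1 : K)) '' TS d n) with hL
    have hmemiff : ∀ σ : Fin n →₀ ℕ, (monomial σ (1 : K) ∈ L) ↔ σ ∈ TS d n :=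
      fun σ => monomial_mem_L_iff hd
    obtain ⟨σ0, hσ0d, hσ0m⟩ := hne
    set F := (antidiagonalTuple n i).filter (fun v => d i ≤ cnt n i v) with hF
    have hσ0T := (hmemiff σ0).mp hσ0m
    have hσ0F : ⇑σ0 ∈ F := by
      rw [hF, Finset.mem_filter]
      constructor
      · have := coe_mem_AT σ0
        rwa [hσ0d] at this
      · have := hσ0T.2
        rwa [hσ0d] at this
    have hFne : F.Nonempty := ⟨_, hσ0F⟩
    obtain ⟨v0, hv0F, hv0c⟩ := Finset.mem_image.mp
      (Finset.min'_mem (F.image (cnt n i)) (hFne.image _))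
    have hv0AT : v0 ∈ antidiagonalTuple n i := (Finset.mem_filter.mp hv0F).1
    have hv0d : d i ≤ cnt n i v0 := (Finset.mem_filter.mp hv0F).2
    have hv0deg : mdeg (toFs v0) = i := by
      rw [mdeg_toFs]
      exact mem_antidiagonalTuple.mp hv0AT
    refine ⟨toFs v0, hv0deg, ?_⟩
    ext σ
    simp only [Set.mem_setOf_eq]
    constructor
    · rintro ⟨hdeg, hmem⟩
      have hT := (hmemiff σ).mp hmem
      have h2 : d i ≤ cnt n i ⇑σ := by
        have := hT.2
        rwa [hdeg] at this
      have hσAT : ⇑σ ∈ antidiagonalTuple n i := by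
        have := coe_mem_AT σ
        rwa [hdeg] at this
      have hσF : ⇑σ ∈ F := Finset.mem_filter.mpr ⟨hσAT, h2⟩
      have hle : cnt n i v0 ≤ cnt n i ⇑σ := by
        rw [hv0c]
        exact Finset.min'_le _ _ (Finset.mem_image_of_mem _ hσF)
      refine ⟨hdeg, ?_⟩
      rcases cnt_mono hσAT hle with heq | hlt
      · left
        rw [← toFs_coe σ, ← heq]
      · right
        right
        refine ⟨by rw [hv0deg, hdeg], ?_⟩
        apply glex_lex.mpr
        rw [toFs_apply]
        exact hlt
    · rintro ⟨hdeg, hle⟩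
      refine ⟨hdeg, (hmemiff σ).mpr ?_⟩
      rcases hle with rfl | hlt
      · refine ⟨by rw [hv0deg]; omega, ?_⟩
        rw [hv0deg, toFs_apply]
        exact hv0d
      · rcases hlt with hmlt | ⟨hmeq, hex⟩
        · rw [hv0deg, hdeg] at hmlt
          omega
        · have hlex : toLex v0 < toLex ⇑σ := by
            have := glex_lex.mp hex
            rwa [toFs_apply] at this
          have hstrict : cnt n i v0 < cnt n i ⇑σ := cnt_strict_mono hv0AT hlex
          exact ⟨by rw [hdeg]; omega, by rw [hdeg]; omega⟩
  · intro i
    rw [quotDim_TS hd i, card_B hd0 (d_le_card hd0 rfl hd) i]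
end

section
/- If C ⊆ M_i is a lexsegment in K[X_1,...,X_n], then the product set M_1·C = {X_j·u : u ∈ C, 1 ≤ j ≤ n} is a lexsegment in M_{i+1}. -/
open Finsupp

theorem mdeg_eq_degree {n : ℕ} (u : Fin n →₀ ℕ) : mdeg u = u.degree :=
  (degree_eq_sum u).symm

theorem glexLt_iff {n : ℕ} {u v : Fin n →₀ ℕ} : glexLt u v ↔ toDegLex u < toDegLex v := by
  simp only [glexLt, DegLex.lt_iff, ofDegLex_toDegLex, Lex.lt_iff, ofLex_toLex, mdeg_eq_degree,
    and_comm (a := _ < _)]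

theorem glexLe_iff {n : ℕ} {u v : Fin n →₀ ℕ} : glexLe u v ↔ toDegLex u ≤ toDegLex v := by
  rw [glexLe, glexLt_iff, le_iff_eq_or_lt, toDegLex.injective.eq_iff]

section LinearOrder

variable {α : Type*} [LinearOrder α]

theorem Finsupp.exists_eq_add_single_of_ne_zero {w : α →₀ ℕ} (hw : w ≠ 0) :
    ∃ u j, w = u + single j 1 ∧ ∀ k, j < k → u k = 0 := by
  have hs : w.support.Nonempty := support_nonempty_iff.mpr hw
  set j := w.support.max' hs
  have hj : single j 1 ≤ w := single_le_iff.mpr <|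
    Nat.one_le_iff_ne_zero.mpr (mem_support_iff.mp (w.support.max'_mem hs))
  refine ⟨w - single j 1, j, (tsub_add_cancel_of_le hj).symm, fun k hk => ?_⟩
  have hwk : w k = 0 := notMem_support_iff.mp fun hk' => not_le.mpr hk (w.support.le_max' k hk')
  simp [hwk]

theorem Finsupp.degree_strictMono {σ : Type*} : StrictMono (degree : (σ →₀ ℕ) → ℕ) := by
  intro u v huv
  obtain ⟨d, rfl⟩ := exists_add_of_le huv.le
  have hd : d ≠ 0 := by rintro rfl; simp at huv
  rw [map_add]
  exact Nat.lt_add_of_pos_right (Nat.pos_of_ne_zero ((degree_eq_zero_iff d).not.mpr hd))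

theorem Finsupp.toLex_add_single_lt_of_lt {u v : α →₀ ℕ} {j L : α} (hL : ∀ k, k ≤ L)
    (hu : ∀ k, j < k → u k = 0) (hdeg : u.degree = v.degree) (h : toLex u < toLex v) :
    toLex (u + single j 1) < toLex (v + single L 1) := by
  obtain ⟨j₀, hbelow, hlt⟩ := Lex.lt_iff.mp h
  simp only [ofLex_toLex] at hbelow hlt
  have hj₀ : j₀ < j := by
    by_contra! hjj₀
    have hle : u ≤ v := fun k => by
      rcases lt_trichotomy k j₀ with hk | rfl | hk
      · exact (hbelow k hk).le
      · exact hlt.le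
      · simp [hu k (hjj₀.trans_lt hk)]
    exact (degree_strictMono (hle.lt_of_ne (by rintro rfl; exact hlt.false))).ne hdeg
  refine Lex.lt_iff.mpr ⟨j₀, fun k hk => ?_, ?_⟩
  · simp [(hk.trans hj₀).ne, (hk.trans_le (hL j₀)).ne, hbelow k hk]
  · simp only [ofLex_toLex, coe_add, Pi.add_apply, single_apply, if_neg hj₀.ne']
    omega

theorem Finsupp.toDegLex_le_of_add_single_le {u v : α →₀ ℕ} {j L : α} (hL : ∀ k, k ≤ L)
    (hu : ∀ k, j < k → u k = 0) (hdeg : u.degree = v.degree)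
    (h : toDegLex (v + single L 1) ≤ toDegLex (u + single j 1)) : toDegLex v ≤ toDegLex u := by
  contrapose! h
  have hlex : toLex u < toLex v := by
    simpa [DegLex.lt_iff, hdeg] using h
  simpa [DegLex.lt_iff, hdeg] using toLex_add_single_lt_of_lt hL hu hdeg hlex

end LinearOrder

/-- If `C ⊆ M_i` is a lexsegment in `K[X_1,…,X_n]`, then the product set
`M_1·C = {X_j·u : u ∈ C, 1 ≤ j ≤ n}` is a lexsegment in `M_{i+1}`. (Multiplying a
monomial with exponent vector `u` by `X_j` corresponds to `u + single j 1`.) -/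
theorem stmt4 (n : ℕ) (hn : 1 ≤ n) (i : ℕ) (C : Set (Fin n →₀ ℕ))
    (hC : IsLexSegment i C) :
    IsLexSegment (i + 1)
      {w : Fin n →₀ ℕ | ∃ u ∈ C, ∃ j : Fin n, w = u + Finsupp.single j 1} := by
  obtain ⟨v, hv, rfl⟩ := hC
  rw [mdeg_eq_degree] at hv
  obtain ⟨m, rfl⟩ : ∃ m, n = m + 1 := ⟨n - 1, by omega⟩
  refine ⟨v + single (Fin.last m) 1, by simp [mdeg_eq_degree, hv], ?_⟩
  ext w
  simp only [Set.mem_ofPred_eq, mdeg_eq_degree, glexLe_iff]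
  constructor
  · rintro ⟨u, ⟨hu, hvu⟩, j, rfl⟩
    refine ⟨by simp [hu], ?_⟩
    rw [toDegLex_add, toDegLex_add]
    exact add_le_add hvu (DegLex.single_antitone (Fin.le_last j))
  · rintro ⟨hw, hvw⟩
    obtain ⟨u, j, rfl, hu⟩ := exists_eq_add_single_of_ne_zero (w := w) (by rintro rfl; simp at hw)
    have hdeg : u.degree = i := by simpa using hw
    exact ⟨u, ⟨hdeg, toDegLex_le_of_add_single_le Fin.le_last hu (hdeg.trans hv.symm) hvw⟩, j, rfl⟩
end

section
/- Let C ⊆ M_i be a lexsegment in K[X_1,...,X_n] such that |M_i \ C| = a. Then |M_{i+1} \ M_1·C| = a^⟨i⟩, where M_1·C = {X_j·u : u ∈ C, 1 ≤ j ≤ n}. -/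
namespace St5
open Finset



def Rep : ℕ → List (ℕ × ℕ) → Prop
  | _, [] => True
  | h, (c, k) :: rest => k = h ∧ 1 ≤ h ∧ h ≤ c ∧ (∀ p ∈ rest, p.1 < c) ∧ Rep (h - 1) rest

def S (l : List (ℕ × ℕ)) : ℕ := (l.map (fun p => Nat.choose p.1 p.2)).sum
def S1 (l : List (ℕ × ℕ)) : ℕ := (l.map (fun p => Nat.choose (p.1 + 1) (p.2 + 1))).sum

theorem macaulay_zero (h : ℕ) : macaulay h 0 = 0 := by
  cases h <;> simp [macaulay]

theorem choose_succ_eq (c h : ℕ) (h1 : 1 ≤ h) :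
    Nat.choose (c + 1) h = Nat.choose c (h - 1) + Nat.choose c h := by
  have : h = (h - 1) + 1 := by omega
  rw [this, Nat.choose_succ_succ]; simp

theorem lt_choose_add (c h : ℕ) (h1 : 1 ≤ h) (hc : h ≤ c) : c < Nat.choose c h + h := by
  induction c with
  | zero => omega
  | succ c ih =>
    rcases Nat.lt_or_ge c h with hch | hch
    · have : h = c + 1 := by omega
      subst this; simp [Nat.choose_self]
    · have h2 : 1 ≤ Nat.choose c (h - 1) := Nat.choose_pos (by omega)
      have h3 := choose_succ_eq c h h1
      have := ih hch
      omega

theorem S_lt (l : List (ℕ × ℕ)) : ∀ h t, Rep h l → (∀ p ∈ l, p.1 ≤ t) → h ≤ t + 1 →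
    S l < Nat.choose (t + 1) h := by
  induction l with
  | nil => intro h t _ _ hht; simpa [S] using Nat.choose_pos hht
  | cons p rest ih =>
    intro h t hrep htop hht
    obtain ⟨c, k⟩ := p
    obtain ⟨rfl, h1, hc, hlt, hrest⟩ := hrep
    have hct : c ≤ t := htop _ List.mem_cons_self
    have ihr : S rest < Nat.choose c (k - 1) := by
      rcases Nat.eq_zero_or_pos c with rfl | hcpos
      · omega
      · have hc1 : c - 1 + 1 = c := by omega
        have h2 := ih (k - 1) (c - 1) hrest
          (fun p hp => by have := hlt p hp; omega) (by omega)
        rwa [hc1] at h2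
    have hS : S ((c, k) :: rest) = Nat.choose c k + S rest := by simp [S]
    have h4 := choose_succ_eq c k h1
    have h5 : Nat.choose (c + 1) k ≤ Nat.choose (t + 1) k :=
      Nat.choose_le_choose k (by omega)
    omega


theorem lemA (l : List (ℕ × ℕ)) : ∀ h, Rep h l → macaulay h (S l) = S1 l := by
  induction l with
  | nil => intro h _; simp [S, S1, macaulay_zero]
  | cons p rest ih =>
    intro h hrep
    obtain ⟨c, k⟩ := p
    obtain ⟨rfl, h1, hc, hlt, hrest⟩ := hrep
    set a := S ((c, k) :: rest) with hSa
    have hS : a = Nat.choose c k + S rest := by simp [S, hSa]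
    have hckpos : 0 < Nat.choose c k := Nat.choose_pos hc
    have hane : a ≠ 0 := by omega
    obtain ⟨h', rfl⟩ : ∃ h', k = h' + 1 := ⟨k - 1, by omega⟩
    -- the findGreatest value is c
    have hbound : a < Nat.choose (c + 1) (h' + 1) := by
      have := S_lt ((c, h' + 1) :: rest) (h' + 1) c ⟨rfl, h1, hc, hlt, hrest⟩
        (by rintro ⟨c', k'⟩ hp; rcases List.mem_cons.1 hp with h | h
            · simp at h; omega
            · exact le_of_lt (hlt _ h)) (by omega)
      exact this
    have hcle : c ≤ a + h' + 1 := by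
      have := lt_choose_add c (h' + 1) h1 hc
      omega
    have hfg : Nat.findGreatest (fun m => Nat.choose m (h' + 1) ≤ a) (a + h' + 1) = c := by
      apply le_antisymm
      · by_contra hgt
        push_neg at hgt
        have hspec := Nat.findGreatest_of_ne_zero
          (P := fun m => Nat.choose m (h' + 1) ≤ a)
          (n := a + h' + 1) rfl (by omega)
        have hmono : Nat.choose (c + 1) (h' + 1) ≤
            Nat.choose (Nat.findGreatest (fun m => Nat.choose m (h' + 1) ≤ a) (a + h' + 1)) (h' + 1) :=
          Nat.choose_le_choose _ (by omega)
        omega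
      · exact Nat.le_findGreatest hcle (by omega)
    -- unfold macaulay
    have hrw : macaulay (h' + 1) a
        = Nat.choose (c + 1) (h' + 2) + macaulay h' (a - Nat.choose c (h' + 1)) := by
      rw [macaulay]
      simp only [hane, if_false, hfg]
    have hsub : a - Nat.choose c (h' + 1) = S rest := by omega
    have hsk : h' + 1 - 1 = h' := by omega
    rw [hsk] at hrest
    rw [hrw, hsub, ih h' hrest]
    simp [S1]


open Finset

abbrev A (n d : ℕ) : Finset (Fin n → ℕ) := Finset.Nat.antidiagonalTuple n d

theorem split_card (m d : ℕ) (q : (Fin (m + 1) → ℕ) → Prop) [DecidablePred q] :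
    ((A (m + 1) d).filter q).card
      = ∑ t ∈ range (d + 1), ((A m (d - t)).filter (fun y => q (Fin.cons t y))).card := by
  classical
  have hset : (A (m + 1) d).filter q
      = (range (d + 1)).biUnion
          (fun t => ((A m (d - t)).filter (fun y => q (Fin.cons t y))).image (Fin.cons t)) := by
    ext x
    simp only [mem_filter, Finset.Nat.mem_antidiagonalTuple, mem_biUnion, mem_range, mem_image]
    constructor
    · rintro ⟨hsum, hq⟩
      refine ⟨x 0, ?_, Fin.tail x, ⟨⟨?_, ?_⟩, ?_⟩⟩
      · rw [Fin.sum_univ_succ] at hsum; omega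
      · rw [Fin.sum_univ_succ] at hsum
        simp only [Fin.tail]
        omega
      · rw [Fin.cons_self_tail]; exact hq
      · exact Fin.cons_self_tail x
      
    · rintro ⟨t, ht, y, ⟨⟨hy, hq⟩, rfl⟩⟩
      refine ⟨?_, hq⟩
      rw [Fin.sum_univ_succ]
      simp only [Fin.cons_zero, Fin.cons_succ]
      have : ∑ j : Fin m, y j = d - t := hy
      omega
  rw [hset, card_biUnion]
  · apply Finset.sum_congr rfl
    intro t _
    rw [card_image_of_injective _ (Fin.cons_right_injective (α := fun _ : Fin (m+1) => ℕ) t)]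
  · intro t _ s _ hts
    simp only [Finset.disjoint_left, mem_image]
    rintro x ⟨y, _, rfl⟩ ⟨z, _, hz⟩
    apply hts
    have := congrFun hz 0
    simpa using this.symm

theorem cardA (m d : ℕ) : (A (m + 1) d).card = (d + m).choose m := by
  induction m generalizing d with
  | zero => simp [Finset.Nat.antidiagonalTuple_one]
  | succ m ih =>
    have h := split_card (m + 1) d (fun _ => True)
    simp only [filter_true_of_mem (fun _ _ => trivial)] at h
    rw [h]
    have : ∀ t ∈ range (d + 1), (A (m + 1) (d - t)).card = (d - t + m).choose m :=
      fun t _ => ih (d - t)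
    rw [Finset.sum_congr rfl this]
    -- ∑_{t=0}^{d} C(d - t + m, m) = C(d + m + 1, m + 1)
    have hrefl : ∑ t ∈ range (d + 1), (d - t + m).choose m
        = ∑ t ∈ range (d + 1), (t + m).choose m := by
      rw [← Finset.sum_range_reflect]
      apply Finset.sum_congr rfl
      intro t ht
      simp only [mem_range] at ht
      congr 2
      omega
    have hIcc : ∑ s ∈ Icc m (d + m), s.choose m = ∑ t ∈ range (d + 1), (t + m).choose m := by
      rw [← Finset.Ico_add_one_right_eq_Icc, Finset.sum_Ico_eq_sum_range]
      have : d + m + 1 - m = d + 1 := by omega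
      rw [this]
      apply Finset.sum_congr rfl
      intro t _
      congr 1
      omega
    rw [hrefl, ← hIcc, Nat.sum_Icc_choose]
    congr 1

def ltL {n : ℕ} (u v : Fin n → ℕ) : Prop := ∃ j, u j < v j ∧ ∀ k, k < j → u k = v k

instance {n : ℕ} (u v : Fin n → ℕ) : Decidable (ltL u v) := by
  unfold ltL; infer_instance

def Bset (n d : ℕ) (v : Fin n → ℕ) : Finset (Fin n → ℕ) :=
  (A n d).filter (fun u => ltL u v)

def blockL (b d m : ℕ) : List (ℕ × ℕ) := (List.range b).map (fun t => (d + m - t, d - t))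

def pairs : (n : ℕ) → (Fin n → ℕ) → List (ℕ × ℕ)
  | 0, _ => []
  | 1, _ => []
  | (m + 2), v => blockL (v 0) (∑ j, v j) m ++ pairs (m + 1) (Fin.tail v)

theorem list_sum_range (b : ℕ) (f : ℕ → ℕ) :
    ((List.range b).map f).sum = ∑ t ∈ range b, f t := by
  induction b with
  | zero => simp
  | succ b ih => rw [List.range_succ, Finset.sum_range_succ, List.map_append, List.sum_append, ih]; simp

theorem ltL_cons {m : ℕ} (t b : ℕ) (y w : Fin m → ℕ) :
    ltL (Fin.cons t y) (Fin.cons b w) ↔ t < b ∨ (t = b ∧ ltL y w) := by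
  constructor
  · rintro ⟨j, hj, hpre⟩
    rcases Fin.eq_zero_or_eq_succ j with rfl | ⟨j', rfl⟩
    · left; simpa using hj
    · right
      have ht : t = b := by
        have := hpre 0 (by simp [Fin.lt_def])
        simpa using this
      refine ⟨ht, j', ?_, ?_⟩
      · simpa using hj
      · intro k hk
        have := hpre k.succ (Fin.succ_lt_succ_iff.mpr hk)
        simpa using this
  · rintro (h | ⟨rfl, j, hj, hpre⟩)
    · exact ⟨0, by simpa using h, fun k hk => by simp [Fin.lt_def] at hk⟩
    · refine ⟨j.succ, by simpa using hj, ?_⟩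
      intro k hk
      rcases Fin.eq_zero_or_eq_succ k with rfl | ⟨k', rfl⟩
      · simp
      · have : k' < j := Fin.succ_lt_succ_iff.mp hk
        simpa using hpre k' this

theorem ltL_zero (u v : Fin 0 → ℕ) : ¬ ltL u v := by
  rintro ⟨j, _, _⟩; exact j.elim0

theorem cardB : ∀ (n : ℕ) (v : Fin n → ℕ), (Bset n (∑ j, v j) v).card = S (pairs n v)
  | 0, v => by
    rw [Bset, Finset.filter_false_of_mem (fun u _ => ltL_zero u v)]
    simp [pairs, S]
  | 1, v => by
    have hv : ∑ j, v j = v 0 := by simp [Fin.sum_univ_one]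
    rw [Bset, Finset.filter_false_of_mem]
    · simp [pairs, S]
    · intro u hu
      rw [Finset.Nat.mem_antidiagonalTuple] at hu
      rintro ⟨j, hj, _⟩
      have hj0 : j = 0 := Subsingleton.elim _ _
      subst hj0
      rw [Fin.sum_univ_one] at hu
      omega
  | (m + 2), v => by
    set d := ∑ j, v j with hd
    set b := v 0 with hbdef
    set w := Fin.tail v with hw
    have hsum : d = b + ∑ j, w j := by
      rw [hd, Fin.sum_univ_succ]; rfl
    have hbd : b ≤ d := by omega
    have hsplit := split_card (m + 1) d (fun u => ltL u v)
    have hcons : ∀ t (y : Fin (m + 1) → ℕ), ltL (Fin.cons t y) v ↔ t < b ∨ (t = b ∧ ltL y w) := by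
      intro t y
      conv_lhs => rw [← Fin.cons_self_tail v]
      exact ltL_cons t b y w
    have hg : ∀ t ∈ range (d + 1),
        ((A (m + 1) (d - t)).filter (fun y => ltL (Fin.cons t y) v)).card
          = (if t < b then (d - t + m).choose m else 0)
            + (if t = b then S (pairs (m + 1) w) else 0) := by
      intro t ht
      rcases lt_trichotomy t b with h | h | h
      · rw [Finset.filter_true_of_mem (fun y _ => (hcons t y).mpr (Or.inl h))]
        rw [cardA]
        simp [h, Nat.ne_of_lt h]
      · have hiff : ∀ y, ltL (Fin.cons t y) v ↔ ltL y w := by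
          intro y
          rw [hcons]
          simp [h]
        rw [Finset.filter_congr (fun y _ => by rw [hiff])]
        have hds : d - t = ∑ j, w j := by omega
        rw [hds]
        have hrec := cardB (m + 1) w
        rw [Bset] at hrec
        rw [hrec]
        simp [h]
      · rw [Finset.filter_false_of_mem]
        · simp [Nat.lt_asymm h, Nat.ne_of_gt h]
        · intro y _
          rw [hcons]
          rintro (h' | ⟨h', _⟩) <;> omega
    rw [Bset, hsplit, Finset.sum_congr rfl hg, Finset.sum_add_distrib]
    have h1 : ∑ t ∈ range (d + 1), (if t < b then (d - t + m).choose m else 0)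
        = ∑ t ∈ range b, (d - t + m).choose m := by
      rw [← Finset.sum_filter]
      have : filter (fun t => t < b) (range (d + 1)) = range b := by
        ext t
        simp only [mem_filter, mem_range]
        omega
      rw [this]
    have h2 : ∑ t ∈ range (d + 1), (if t = b then S (pairs (m + 1) w) else 0)
        = S (pairs (m + 1) w) := by
      rw [Finset.sum_ite_eq' (range (d + 1)) b]
      simp [Nat.lt_succ_of_le hbd]
    rw [h1, h2]
    have hS : S (pairs (m + 2) v) = S (blockL b d m) + S (pairs (m + 1) w) := by
      rw [pairs, S, List.map_append, List.sum_append]; rfl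
    rw [hS]
    congr 1
    rw [blockL, S, List.map_map, list_sum_range]
    apply Finset.sum_congr rfl
    intro t ht
    simp only [mem_range] at ht
    simp only [Function.comp]
    have e1 : d + m - t = d - t + m := by omega
    have h3 := Nat.choose_symm (n := d - t + m) (k := m) (Nat.le_add_left m _)
    have e2 : d - t + m - m = d - t := by omega
    rw [e2] at h3
    rw [e1]
    exact h3.symm

theorem blockL_top (b d m : ℕ) : ∀ p ∈ blockL b d m, p.1 ≤ d + m := by
  intro p hp
  rw [blockL, List.mem_map] at hp
  obtain ⟨t, _, rfl⟩ := hp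
  omega

theorem pairs_top : ∀ (n : ℕ) (v : Fin n → ℕ), ∀ p ∈ pairs n v, p.1 + 2 ≤ (∑ j, v j) + n
  | 0, v => by simp [pairs]
  | 1, v => by simp [pairs]
  | (m + 2), v => by
    intro p hp
    rw [pairs, List.mem_append] at hp
    have hsum : ∑ j, v j = v 0 + ∑ j, Fin.tail v j := by
      rw [Fin.sum_univ_succ]; rfl
    rcases hp with hp | hp
    · have := blockL_top (v 0) (∑ j, v j) m p hp
      omega
    · have := pairs_top (m + 1) (Fin.tail v) p hp
      omega

theorem blockL_succ (b d m : ℕ) (hd : 1 ≤ d) :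
    blockL (b + 1) d m = (d + m, d) :: blockL b (d - 1) m := by
  rw [blockL, blockL, List.range_succ_eq_map, List.map_cons, List.map_map]
  refine congrArg₂ List.cons (by simp) ?_
  simp only [List.map_inj_left, Function.comp, List.mem_range, Prod.mk.injEq]
  intro t ht
  omega

theorem rep_block (m : ℕ) : ∀ (b d : ℕ) (l : List (ℕ × ℕ)), b ≤ d →
    Rep (d - b) l → (∀ p ∈ l, p.1 + b < d + m + 1) → Rep d (blockL b d m ++ l) := by
  intro b
  induction b with
  | zero =>
    intro d l _ hrep _
    simpa [blockL] using hrep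
  | succ b ih =>
    intro d l hbd hrep htop
    have hd : 1 ≤ d := by omega
    rw [blockL_succ b d m hd, List.cons_append]
    refine ⟨rfl, hd, by omega, ?_, ?_⟩
    · intro p hp
      rw [List.mem_append] at hp
      rcases hp with hp | hp
      · have := blockL_top b (d - 1) m p hp
        omega
      · have := htop p hp
        omega
    · have e1 : d - 1 - b = d - (b + 1) := by omega
      exact ih (d - 1) l (by omega) (by rw [e1]; exact hrep)
        (fun p hp => by have := htop p hp; omega)

theorem pairs_rep : ∀ (n : ℕ) (v : Fin n → ℕ), Rep (∑ j, v j) (pairs n v)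
  | 0, _ => trivial
  | 1, _ => trivial
  | (m + 2), v => by
    rw [pairs]
    have hsum : ∑ j, v j = v 0 + ∑ j, Fin.tail v j := by
      rw [Fin.sum_univ_succ]; rfl
    apply rep_block
    · omega
    · have e : ∑ j, v j - v 0 = ∑ j, Fin.tail v j := by omega
      rw [e]
      exact pairs_rep (m + 1) (Fin.tail v)
    · intro p hp
      have := pairs_top (m + 1) (Fin.tail v) p hp
      omega

theorem blockL_shift (b d m : ℕ) (hbd : b ≤ d) :
    blockL b (d + 1) m = (blockL b d m).map (fun p => (p.1 + 1, p.2 + 1)) := by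
  rw [blockL, blockL, List.map_map]
  apply List.map_congr_left
  intro t ht
  rw [List.mem_range] at ht
  simp only [Function.comp]
  congr 1 <;> omega

theorem pairs_shift : ∀ (n : ℕ) (v : Fin n → ℕ) (i : Fin n), i.val = n - 1 →
    pairs n (Function.update v i (v i + 1)) = (pairs n v).map (fun p => (p.1 + 1, p.2 + 1))
  | 0, _, i, _ => by simp [pairs]
  | 1, _, _, _ => by simp [pairs]
  | (m + 2), v, i, hi => by
    have hival : i.val = m + 1 := by simpa using hi
    set v' := Function.update v i (v i + 1) with hv'
    have hv'0 : v' 0 = v 0 := by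
      rw [hv', Function.update_apply, if_neg]
      intro hc
      have := congrArg Fin.val hc
      simp [hival] at this
    have hsum' : ∑ j, v' j = (∑ j, v j) + 1 := by
      rw [hv', Finset.sum_update_of_mem (Finset.mem_univ _)]
      rw [Finset.sum_eq_sum_sdiff_singleton_add (Finset.mem_univ i) v]
      omega
    have htail : Fin.tail v' = Function.update (Fin.tail v) (⟨m, by omega⟩ : Fin (m + 1))
        (Fin.tail v ⟨m, by omega⟩ + 1) := by
      funext k
      show v' k.succ = _
      rw [hv', Function.update_apply, Function.update_apply]
      have h1 : (k.succ = i) ↔ (k = (⟨m, by omega⟩ : Fin (m + 1))) := by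
        rw [Fin.ext_iff, Fin.ext_iff]
        simp [hival]
      by_cases h : k = (⟨m, by omega⟩ : Fin (m + 1))
      · rw [if_pos (h1.mpr h), if_pos h]
        have hsucc : ((⟨m, by omega⟩ : Fin (m + 1)).succ : Fin (m + 2)) = i := by
          rw [Fin.ext_iff]; simp [hival]
        show v i + 1 = v ((⟨m, by omega⟩ : Fin (m + 1)).succ) + 1
        rw [hsucc]
      · rw [if_neg (fun hc => h (h1.mp hc)), if_neg h]
        rfl
    have hb : v 0 ≤ ∑ j, v j := by
      rw [Fin.sum_univ_succ]; omega
    rw [pairs, pairs, hv'0, hsum', htail,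
      pairs_shift (m + 1) (Fin.tail v) ⟨m, by omega⟩ (by simp),
      blockL_shift (v 0) (∑ j, v j) m hb, List.map_append]


theorem mdeg_add {n : ℕ} (x y : Fin n →₀ ℕ) : mdeg (x + y) = mdeg x + mdeg y := by
  simp [mdeg, Finsupp.add_apply, Finset.sum_add_distrib]

theorem mdeg_single {n : ℕ} (j : Fin n) (c : ℕ) : mdeg (Finsupp.single j c) = c := by
  simp [mdeg, Finsupp.single_apply]

theorem glex_tri {n : ℕ} (u v : Fin n →₀ ℕ) (h : mdeg u = mdeg v) :
    u = v ∨ glexLt u v ∨ glexLt v u := by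
  by_cases huv : u = v
  · exact Or.inl huv
  right
  have hne : (Finset.univ.filter (fun k => u k ≠ v k)).Nonempty := by
    by_contra hempty
    rw [Finset.not_nonempty_iff_eq_empty] at hempty
    apply huv
    ext k
    by_contra hk
    have : k ∈ Finset.univ.filter (fun k => u k ≠ v k) := by simp [hk]
    simp [hempty] at this
  set j := (Finset.univ.filter (fun k => u k ≠ v k)).min' hne with hjdef
  have hj : u j ≠ v j := by
    have := Finset.min'_mem _ hne
    simpa using this
  have hpre : ∀ k, k < j → u k = v k := by
    intro k hk
    by_contra hc
    have : j ≤ k := Finset.min'_le _ _ (by simp [hc])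
    exact absurd hk (not_lt.mpr this)
  rcases lt_or_gt_of_ne hj with h' | h'
  · exact Or.inl (Or.inr ⟨h, j, h', hpre⟩)
  · exact Or.inr (Or.inr ⟨h.symm, j, h', fun k hk => (hpre k hk).symm⟩)

theorem glex_trans {n : ℕ} {a b c : Fin n →₀ ℕ} (h1 : glexLt a b) (h2 : glexLt b c) :
    glexLt a c := by
  rcases h1 with h1 | ⟨e1, j1, hj1, hp1⟩
  · rcases h2 with h2 | ⟨e2, _⟩
    · exact Or.inl (by omega)
    · exact Or.inl (by omega)
  · rcases h2 with h2 | ⟨e2, j2, hj2, hp2⟩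
    · exact Or.inl (by omega)
    · right
      refine ⟨by omega, ?_⟩
      rcases lt_trichotomy j1 j2 with hj | hj | hj
      · exact ⟨j1, by rw [hp2 j1 hj] at hj1; exact hj1,
          fun k hk => (hp1 k hk).trans (hp2 k (hk.trans hj))⟩
      · subst hj
        exact ⟨j1, by omega, fun k hk => (hp1 k hk).trans (hp2 k hk)⟩
      · exact ⟨j2, by rw [← hp1 j2 hj] at hj2; exact hj2,
          fun k hk => (hp1 k (hk.trans hj)).trans (hp2 k hk)⟩

theorem glex_irrefl {n : ℕ} (u : Fin n →₀ ℕ) : ¬ glexLt u u := by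
  rintro (h | ⟨_, j, hj, _⟩)
  · omega
  · omega

theorem glex_asymm {n : ℕ} {u v : Fin n →₀ ℕ} (h1 : glexLt u v) (h2 : glexLt v u) : False :=
  glex_irrefl u (glex_trans h1 h2)

theorem glex_lt_add {n : ℕ} {u v : Fin n →₀ ℕ} (w : Fin n →₀ ℕ) (h : glexLt u v) :
    glexLt (u + w) (v + w) := by
  rcases h with h | ⟨e, j, hj, hp⟩
  · exact Or.inl (by rw [mdeg_add, mdeg_add]; omega)
  · refine Or.inr ⟨by rw [mdeg_add, mdeg_add]; omega, j, ?_, ?_⟩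
    · simp only [Finsupp.add_apply]; omega
    · intro k hk
      simp only [Finsupp.add_apply, hp k hk]

theorem glex_le_add {n : ℕ} {u v : Fin n →₀ ℕ} (w : Fin n →₀ ℕ) (h : glexLe u v) :
    glexLe (u + w) (v + w) := by
  rcases h with rfl | h
  · exact Or.inl rfl
  · exact Or.inr (glex_lt_add w h)

theorem glex_le_trans {n : ℕ} {a b c : Fin n →₀ ℕ} (h1 : glexLe a b) (h2 : glexLe b c) :
    glexLe a c := by
  rcases h1 with rfl | h1
  · exact h2
  rcases h2 with rfl | h2
  · exact Or.inr h1
  · exact Or.inr (glex_trans h1 h2)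

theorem glex_single_le {n : ℕ} (u : Fin n →₀ ℕ) (lst j : Fin n) (hlst : ∀ k : Fin n, k ≤ lst) :
    glexLe (u + Finsupp.single lst 1) (u + Finsupp.single j 1) := by
  by_cases hj : j = lst
  · subst hj; exact Or.inl rfl
  · have hjl : j < lst := lt_of_le_of_ne (hlst j) hj
    refine Or.inr (Or.inr ⟨?_, j, ?_, ?_⟩)
    · rw [mdeg_add, mdeg_add, mdeg_single, mdeg_single]
    · simp only [Finsupp.add_apply, Finsupp.single_apply]
      have h1 : ¬ (lst = j) := fun hc => hj hc.symm
      simp [h1]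
    · intro k hk
      have hkl : k ≠ lst := ne_of_lt (hk.trans hjl)
      have hkj : k ≠ j := ne_of_lt hk
      simp only [Finsupp.add_apply, Finsupp.single_apply]
      rw [if_neg (fun hc : lst = k => hkl hc.symm), if_neg (fun hc : j = k => hkj hc.symm)]

theorem glexle_of_prefix {n : ℕ} (u v : Fin n →₀ ℕ) (j : Fin n) (hdeg : mdeg u = mdeg v)
    (hpre : ∀ k, k < j → u k = v k) (hj : v j ≤ u j) (hzu : ∀ k, j < k → u k = 0) :
    glexLe v u := by
  rcases Nat.lt_or_ge (v j) (u j) with hlt | hge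
  · exact Or.inr (Or.inr ⟨hdeg.symm, j, hlt, fun k hk => (hpre k hk).symm⟩)
  have hvj : u j = v j := by omega
  have hsum : ∀ x : Fin n →₀ ℕ, mdeg x
      = ∑ k ∈ univ.filter (fun k => k ≤ j), x k
        + ∑ k ∈ univ.filter (fun k => ¬ k ≤ j), x k := by
    intro x
    rw [mdeg, ← Finset.sum_filter_add_sum_filter_not univ (fun k => k ≤ j)]
  have h1 : ∑ k ∈ univ.filter (fun k => k ≤ j), u k
      = ∑ k ∈ univ.filter (fun k => k ≤ j), v k := by
    apply Finset.sum_congr rfl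
    intro k hk
    simp only [mem_filter] at hk
    rcases lt_or_eq_of_le hk.2 with h | h
    · exact hpre k h
    · subst h; exact hvj
  have h2 : ∑ k ∈ univ.filter (fun k => ¬ k ≤ j), u k = 0 := by
    apply Finset.sum_eq_zero
    intro k hk
    simp only [mem_filter, not_le] at hk
    exact hzu k hk.2
  have h3 : ∑ k ∈ univ.filter (fun k => ¬ k ≤ j), v k = 0 := by
    have e1 := hsum u
    have e2 := hsum v
    omega
  left
  ext k
  rcases le_or_gt k j with hk | hk
  · rcases lt_or_eq_of_le hk with h | h
    · exact (hpre k h).symm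
    · subst h; exact hvj.symm
  · rw [hzu k hk]
    exact Finset.sum_eq_zero_iff.mp h3 k (by simp only [mem_filter, mem_univ, true_and, not_le]; exact hk)

theorem exists_factor {n : ℕ} (v w : Fin n →₀ ℕ) (lst : Fin n) (hlst : ∀ k : Fin n, k ≤ lst)
    (hvw : glexLe (v + Finsupp.single lst 1) w) (hdw : mdeg w = mdeg v + 1) :
    ∃ u, (mdeg u = mdeg v ∧ glexLe v u) ∧ ∃ j : Fin n, w = u + Finsupp.single j 1 := by
  rcases hvw with heq | hlt
  · exact ⟨v, ⟨rfl, Or.inl rfl⟩, lst, heq.symm⟩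
  have hdeq : mdeg (v + Finsupp.single lst 1) = mdeg w := by
    rw [mdeg_add, mdeg_single, hdw]
  rcases hlt with h | ⟨hddeq, k0, hk0, hpre⟩
  · omega
  have hve : ∀ k : Fin n, (v + Finsupp.single lst 1 : Fin n →₀ ℕ) k
      = v k + (if lst = k then 1 else 0) := by
    intro k
    rw [Finsupp.add_apply, Finsupp.single_apply]
  have hwne : w.support.Nonempty := by
    rw [Finsupp.support_nonempty_iff]
    intro hw0
    rw [hw0] at hdw
    simp [mdeg] at hdw
  obtain ⟨j, hjmem, hjmax⟩ :
      ∃ j ∈ w.support, ∀ k ∈ w.support, k ≤ j :=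
    ⟨w.support.max' hwne, w.support.max'_mem hwne, fun k hk => Finset.le_max' _ k hk⟩
  have hwj : 1 ≤ w j := by
    have := Finsupp.mem_support_iff.mp hjmem
    omega
  have hzero : ∀ k, j < k → w k = 0 := by
    intro k hk
    by_contra hc
    have hmem : k ∈ w.support := Finsupp.mem_support_iff.mpr hc
    exact absurd hk (not_lt.mpr (hjmax k hmem))
  set u := w - Finsupp.single j 1 with hudef
  have hu_apply : ∀ k, u k = w k - (if j = k then 1 else 0) := by
    intro k
    rw [hudef, Finsupp.tsub_apply, Finsupp.single_apply]
  have hw_eq : w = u + Finsupp.single j 1 := by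
    ext k
    rw [Finsupp.add_apply, hu_apply k, Finsupp.single_apply]
    by_cases h : j = k
    · subst h; simp; omega
    · simp [h]
  have hdu : mdeg u = mdeg v := by
    have := mdeg_add u (Finsupp.single j 1)
    rw [← hw_eq, mdeg_single] at this
    omega
  refine ⟨u, ⟨hdu, ?_⟩, j, hw_eq⟩
  have hk0j : k0 ≤ j := by
    by_contra hc
    push_neg at hc
    have hz := hzero k0 hc
    omega
  have hjlst : j ≤ lst := hlst j
  rcases lt_or_eq_of_le hk0j with hA | hB
  · -- k0 < j : strict inequality at k0
    refine Or.inr (Or.inr ⟨hdu.symm, k0, ?_, ?_⟩)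
    · have hk0lst : k0 ≠ lst := ne_of_lt (lt_of_lt_of_le hA hjlst)
      have h1 := hve k0
      rw [if_neg (fun hc : lst = k0 => hk0lst hc.symm)] at h1
      have h2 := hu_apply k0
      rw [if_neg (fun hc : j = k0 => absurd hc.symm (ne_of_lt hA))] at h2
      omega
    · intro k hk
      have hklst : k ≠ lst := ne_of_lt (lt_of_lt_of_le (hk.trans hA) hjlst)
      have h1 := hpre k hk
      rw [hve k, if_neg (fun hc : lst = k => hklst hc.symm)] at h1
      have h2 := hu_apply k
      rw [if_neg (fun hc : j = k => absurd hc.symm (ne_of_lt (hk.trans hA)))] at h2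
      omega
  · -- k0 = j
    rw [hB] at hk0 hpre
    apply glexle_of_prefix u v j hdu
    · intro k hk
      have hklst : k ≠ lst := ne_of_lt (lt_of_lt_of_le hk hjlst)
      have h1 := hpre k hk
      rw [hve k, if_neg (fun hc : lst = k => hklst hc.symm)] at h1
      have h2 := hu_apply k
      rw [if_neg (fun hc : j = k => absurd hc.symm (ne_of_lt hk))] at h2
      omega
    · have h1 := hve j
      have h2 := hu_apply j
      rw [if_pos rfl] at h2
      by_cases hc : lst = j
      · rw [if_pos hc] at h1; omega
      · rw [if_neg hc] at h1; omega
    · intro k hk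
      have h2 := hu_apply k
      rw [if_neg (fun hc : j = k => absurd hc (ne_of_lt hk))] at h2
      rw [h2, hzero k hk]

theorem ncard_eq (n d : ℕ) (z : Fin n →₀ ℕ) (hz : mdeg z = d) :
    Set.ncard {u : Fin n →₀ ℕ | mdeg u = d ∧ glexLt u z}
      = (Bset n d (Finsupp.equivFunOnFinite z)).card := by
  classical
  set E := (Finsupp.equivFunOnFinite : (Fin n →₀ ℕ) ≃ (Fin n → ℕ)) with hE
  have hset : {u : Fin n →₀ ℕ | mdeg u = d ∧ glexLt u z} = E.symm '' ↑(Bset n d (E z)) := by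
    ext u
    simp only [Set.mem_image, Finset.mem_coe, Bset, Finset.mem_filter,
      Finset.Nat.mem_antidiagonalTuple, Set.mem_setOf_eq]
    constructor
    · rintro ⟨hdu, hlt⟩
      refine ⟨E u, ⟨hdu, ?_⟩, by simp⟩
      rcases hlt with h | ⟨_, j, hj, hp⟩
      · exact absurd h (by omega)
      · exact ⟨j, hj, hp⟩
    · rintro ⟨x, ⟨hx, hlt⟩, rfl⟩
      have hxd : mdeg (E.symm x) = d := hx
      refine ⟨hxd, Or.inr ⟨by omega, ?_⟩⟩
      obtain ⟨j, hj, hp⟩ := hlt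
      exact ⟨j, hj, hp⟩
  rw [hset, Set.ncard_image_of_injective _ (Equiv.injective _), Set.ncard_coe_finset]

theorem S_map (l : List (ℕ × ℕ)) : S (l.map (fun p => (p.1 + 1, p.2 + 1))) = S1 l := by
  simp [S, S1, List.map_map]
  rfl

end St5

/-- Let `C ⊆ M_i` be a lexsegment in `K[X_1,…,X_n]` with `|M_i \ C| = a`. Then
`|M_{i+1} \ M_1·C| = a^⟨i⟩`, where `M_1·C = {X_j·u : u ∈ C, 1 ≤ j ≤ n}`.
(Monomials are encoded as exponent vectors; multiplying by `X_j` is `u + single j 1`.) -/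
theorem stmt5 (n : ℕ) (hn : 1 ≤ n) (i : ℕ) (hi : 1 ≤ i) (a : ℕ)
    (C : Set (Fin n →₀ ℕ)) (hC : IsLexSegment i C)
    (ha : ({σ : Fin n →₀ ℕ | mdeg σ = i} \ C).ncard = a) :
    ({σ : Fin n →₀ ℕ | mdeg σ = i + 1} \
      {w : Fin n →₀ ℕ | ∃ u ∈ C, ∃ j : Fin n, w = u + Finsupp.single j 1}).ncard
      = macaulay i a := by
  classical
  obtain ⟨v, hvdeg, hCdef⟩ := hC
  subst hCdef
  set lst : Fin n := ⟨n - 1, by omega⟩ with hlst_def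
  have hlst : ∀ k : Fin n, k ≤ lst := by
    intro k
    rw [Fin.le_def]
    have := k.isLt
    show k.val ≤ n - 1
    omega
  set e := Finsupp.single lst 1 with he
  have hdve : mdeg (v + e) = i + 1 := by rw [St5.mdeg_add, he, St5.mdeg_single, hvdeg]
  have h1 : {σ : Fin n →₀ ℕ | mdeg σ = i} \ {u | mdeg u = i ∧ glexLe v u}
      = {u : Fin n →₀ ℕ | mdeg u = i ∧ glexLt u v} := by
    ext u
    simp only [Set.mem_diff, Set.mem_setOf_eq, not_and]
    constructor
    · rintro ⟨hdu, hnot⟩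
      refine ⟨hdu, ?_⟩
      rcases St5.glex_tri u v (by omega) with rfl | h | h
      · exact absurd (Or.inl rfl) (hnot hdu)
      · exact h
      · exact absurd (Or.inr h) (hnot hdu)
    · rintro ⟨hdu, hlt⟩
      refine ⟨hdu, fun _ hle => ?_⟩
      rcases hle with rfl | h
      · exact St5.glex_irrefl _ hlt
      · exact St5.glex_asymm hlt h
  have h2 : {σ : Fin n →₀ ℕ | mdeg σ = i + 1} \
        {w : Fin n →₀ ℕ | ∃ u ∈ {x : Fin n →₀ ℕ | mdeg x = i ∧ glexLe v x},
          ∃ j : Fin n, w = u + Finsupp.single j 1}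
      = {w : Fin n →₀ ℕ | mdeg w = i + 1 ∧ glexLt w (v + e)} := by
    ext w
    simp only [Set.mem_diff, Set.mem_setOf_eq]
    constructor
    · rintro ⟨hdw, hnot⟩
      refine ⟨hdw, ?_⟩
      rcases St5.glex_tri w (v + e) (by omega) with rfl | h | h
      · exact absurd ⟨v, ⟨hvdeg, Or.inl rfl⟩, lst, rfl⟩ hnot
      · exact h
      · obtain ⟨u, ⟨hdu, hvu⟩, j, hw⟩ :=
          St5.exists_factor v w lst hlst (Or.inr h) (by omega)
        exact absurd ⟨u, ⟨by omega, hvu⟩, j, hw⟩ hnot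
    · rintro ⟨hdw, hlt⟩
      refine ⟨hdw, ?_⟩
      rintro ⟨u, ⟨hdu, hvu⟩, j, rfl⟩
      have hle : glexLe (v + e) (u + Finsupp.single j 1) :=
        St5.glex_le_trans (St5.glex_le_add e hvu) (St5.glex_single_le u lst j hlst)
      rcases hle with heq | h
      · exact St5.glex_irrefl _ (heq ▸ hlt)
      · exact St5.glex_asymm hlt h
  rw [h1] at ha
  rw [h2]
  rw [St5.ncard_eq n i v hvdeg] at ha
  rw [St5.ncard_eq n (i + 1) (v + e) hdve]
  set E := (Finsupp.equivFunOnFinite : (Fin n →₀ ℕ) ≃ (Fin n → ℕ)) with hE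
  have hsum_v : (∑ j, (E v) j) = i := hvdeg
  have hsum_ve : (∑ j, (E (v + e)) j) = i + 1 := hdve
  have hb1 : (St5.Bset n i (E v)).card = St5.S (St5.pairs n (E v)) := by
    have h := St5.cardB n (E v)
    rwa [hsum_v] at h
  have hb2 : (St5.Bset n (i + 1) (E (v + e))).card = St5.S (St5.pairs n (E (v + e))) := by
    have h := St5.cardB n (E (v + e))
    rwa [hsum_ve] at h
  have hEshift : E (v + e) = Function.update (E v) lst ((E v) lst + 1) := by
    funext k
    show (v + e) k = _
    rw [he, Finsupp.add_apply, Finsupp.single_apply, Function.update_apply]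
    by_cases h : k = lst
    · subst h; simp; rfl
    · rw [if_neg (fun hc : lst = k => h hc.symm), if_neg h]
      show v k + 0 = v k
      omega
  have hshift := St5.pairs_shift n (E v) lst rfl
  rw [hEshift] at hb2 ⊢
  rw [hb2, hshift, St5.S_map]
  have hrep : St5.Rep i (St5.pairs n (E v)) := by
    have h := St5.pairs_rep n (E v)
    rwa [hsum_v] at h
  rw [← St5.lemA (St5.pairs n (E v)) i hrep, ← hb1, ha]
end

section
/- Let (d_i)_{i≥0} be a sequence of nonnegative integers such that d_0 = 1 and d_{i+1} ≤ d_i^⟨i⟩ for all i ≥ 1. Then there exists an abelian semigroup G and a subset A ⊆ G such that d_h ≤ |hA| ≤ d_h + 1 for all h ≥ 0, where hA denotes the h-fold iterated sumset (with 0A a singleton). -/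
open scoped Pointwise

/-- The `h`-fold iterated sumset `hA = A + ⋯ + A` (`h` summands), for `h ≥ 1`.
(The value at `h = 0` is irrelevant; it is set to `A` by convention.) -/
def iterSumset {G : Type*} [AddCommSemigroup G] (A : Set G) : ℕ → Set G
  | 0 => A
  | 1 => A
  | h + 2 => iterSumset A (h + 1) + A

namespace S9

def rnkA : ℕ → List ℕ → ℕ
  | _, [] => 0
  | s, x :: xs => Nat.choose (x + s + xs.length) (s + xs.length + 1) + rnkA s xs

@[simp] lemma rnkA_nil (s : ℕ) : rnkA s [] = 0 := rfl
@[simp] lemma rnkA_cons (s x : ℕ) (xs : List ℕ) :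
    rnkA s (x :: xs) = Nat.choose (x + s + xs.length) (s + xs.length + 1) + rnkA s xs := rfl

lemma rnkA_ub (n s : ℕ) : ∀ l : List ℕ, (∀ x ∈ l, x ≤ n) →
    rnkA s l + 1 ≤ Nat.choose (n + s + l.length) (s + l.length)
  | [], _ => by simp; exact Nat.choose_pos (by omega)
  | x :: xs, hb => by
    have h1 := rnkA_ub n s xs (fun y hy => hb y (List.mem_cons_of_mem _ hy))
    have h2 : Nat.choose (x + s + xs.length) (s + xs.length + 1) ≤
        Nat.choose (n + s + xs.length) (s + xs.length + 1) :=
      Nat.choose_le_choose _ (by have := hb x (List.mem_cons_self); omega)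
    have hp : Nat.choose (n + s + xs.length + 1) (s + xs.length + 1) =
        Nat.choose (n + s + xs.length) (s + xs.length) +
        Nat.choose (n + s + xs.length) (s + xs.length + 1) :=
      Nat.choose_succ_succ _ _
    simp only [rnkA_cons, List.length_cons]
    have : n + s + (xs.length + 1) = n + s + xs.length + 1 := by omega
    rw [this, show s + (xs.length + 1) = s + xs.length + 1 by omega, hp]
    omega

lemma rnkA_one_le (v : ℕ) : ∀ l : List ℕ, (∀ x ∈ l, x ≤ v) →
    rnkA 1 l ≤ rnkA 0 l + Nat.choose (v + l.length) (l.length + 1)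
  | [], _ => by simp
  | x :: xs, hb => by
    have hx : x ≤ v := hb x (List.mem_cons_self)
    have ih := rnkA_one_le v xs (fun y hy => hb y (List.mem_cons_of_mem _ hy))
    set L := xs.length with hL
    -- goal: C(x+1+L, 1+L+1) + rnkA 1 xs ≤ C(x+0+L, 0+L+1) + rnkA 0 xs + C(v+(L+1), (L+1)+1)
    have key : Nat.choose (x + 1 + L) (L + 2) + Nat.choose (v + L) (L + 1) ≤
        Nat.choose (x + L) (L + 1) + Nat.choose (v + L + 1) (L + 2) := by
      have e1 : Nat.choose (x + L + 1) (L + 2) =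
          Nat.choose (x + L) (L + 1) + Nat.choose (x + L) (L + 2) := Nat.choose_succ_succ _ _
      have e2 : Nat.choose (v + L + 1) (L + 2) =
          Nat.choose (v + L) (L + 1) + Nat.choose (v + L) (L + 2) := Nat.choose_succ_succ _ _
      have h3 : Nat.choose (x + L) (L + 2) ≤ Nat.choose (v + L) (L + 2) :=
        Nat.choose_le_choose _ (by omega)
      have : x + 1 + L = x + L + 1 := by omega
      rw [this, e1, e2]; omega
    simp only [rnkA_cons, List.length_cons]
    have e0 : x + 0 + L = x + L := by omega
    have e1 : x + 1 + L = x + 1 + L := rfl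
    rw [← hL, show (1:ℕ)+L+1 = L+2 by omega, show x+0+L = x+L by omega,
      show (0:ℕ)+L+1 = L+1 by omega, show v+(L+1) = v+L+1 by omega, show L+1+1 = L+2 by omega]
    omega

end S9

namespace S9

def insD (v : ℕ) : List ℕ → List ℕ
  | [] => [v]
  | x :: xs => if x ≤ v then v :: x :: xs else x :: insD v xs

@[simp] lemma insD_length (v : ℕ) : ∀ l : List ℕ, (insD v l).length = l.length + 1
  | [] => rfl
  | x :: xs => by
    simp only [insD]
    split
    · simp
    · simp [insD_length v xs]

lemma insD_perm (v : ℕ) : ∀ l : List ℕ, (insD v l).Perm (v :: l)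
  | [] => List.Perm.refl _
  | x :: xs => by
    simp only [insD]
    split
    · exact List.Perm.refl _
    · exact ((insD_perm v xs).cons x).trans (List.Perm.swap v x xs)

lemma sorted_mem_le {x : ℕ} {xs : List ℕ} (h : List.Pairwise (· ≥ ·) (x :: xs)) :
    ∀ y ∈ x :: xs, y ≤ x := by
  intro y hy
  rcases List.mem_cons.1 hy with rfl | hy
  · exact le_refl _
  · exact (List.pairwise_cons.1 h).1 y hy

lemma insD_sorted (v : ℕ) : ∀ l : List ℕ, List.Pairwise (· ≥ ·) l →
    List.Pairwise (· ≥ ·) (insD v l)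
  | [], _ => by simp [insD]
  | x :: xs, h => by
    simp only [insD]
    split
    · exact List.pairwise_cons.2 ⟨fun b hb => le_trans (sorted_mem_le h b hb) (by assumption),  h⟩
    · refine List.pairwise_cons.2 ⟨fun b hb => ?_, insD_sorted v xs (List.pairwise_cons.1 h).2⟩
      have := (insD_perm v xs).mem_iff.1 hb
      rcases List.mem_cons.1 this with rfl | hb'
      · omega
      · exact (List.pairwise_cons.1 h).1 b hb'

lemma rnkA_insD (v : ℕ) : ∀ l : List ℕ, List.Pairwise (· ≥ ·) l →
    rnkA 1 l ≤ rnkA 0 (insD v l)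
  | [], _ => by simp
  | x :: xs, h => by
    have hs := (List.pairwise_cons.1 h).2
    simp only [insD]
    split
    · -- x ≤ v : insD = v :: x :: xs
      rename_i hxv
      have hK := rnkA_one_le x xs (List.pairwise_cons.1 h).1
      simp only [rnkA_cons, List.length_cons]
      set L := xs.length with hL
      have h1 : Nat.choose (x+1+L) (1+L+1) ≤ Nat.choose (v+0+(L+1)) (0+(L+1)+1) := by
        rw [show (0:ℕ)+(L+1)+1 = 1+L+1 by omega]
        exact Nat.choose_le_choose _ (by omega)
      have h2 : Nat.choose (x+L) (L+1) = Nat.choose (x+0+L) (0+L+1) := by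
        congr 1 <;> omega
      omega
    · -- v < x : insD = x :: insD v xs
      rename_i hxv
      have ih := rnkA_insD v xs hs
      simp only [rnkA_cons, List.length_cons, insD_length]
      have h1 : Nat.choose (x+1+xs.length) (1+xs.length+1) =
          Nat.choose (x+0+(xs.length+1)) (0+(xs.length+1)+1) := by congr 1 <;> omega
      omega

lemma rnkA_zero_of : ∀ l : List ℕ, List.Pairwise (· ≥ ·) l → rnkA 0 l = 0 → rnkA 1 l = 0
  | [], _, _ => rfl
  | x :: xs, h, h0 => by
    simp only [rnkA_cons] at h0 ⊢
    have hx : x = 0 := by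
      by_contra hx
      have : Nat.choose (x+0+xs.length) (0+xs.length+1) > 0 :=
        Nat.choose_pos (by omega)
      omega
    have h2 := rnkA_zero_of xs (List.pairwise_cons.1 h).2 (by omega)
    subst hx
    have : Nat.choose (0+1+xs.length) (1+xs.length+1) = 0 :=
      Nat.choose_eq_zero_of_lt (by omega)
    omega

end S9

namespace S9

lemma choose_ge_self {x L : ℕ} (hx : 1 ≤ x) : x ≤ Nat.choose (x + L) (L + 1) := by
  induction L with
  | zero => simp
  | succ L ih =>
    rw [show x + (L+1) = x + L + 1 by omega, show L+1+1 = L+2 by omega]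
    have hq : Nat.choose (x + L + 1) (L + 2) = Nat.choose (x + L) (L + 1) + Nat.choose (x + L) (L + 2) :=
      Nat.choose_succ_succ _ _
    omega

lemma macaulay_rnk : ∀ l : List ℕ, List.Pairwise (· ≥ ·) l →
    macaulay l.length (rnkA 0 l) = rnkA 1 l
  | [], _ => rfl
  | x :: xs, h => by
    have hs := (List.pairwise_cons.1 h).2
    have ih := macaulay_rnk xs hs
    set L := xs.length with hL
    set a : ℕ := rnkA 0 (x :: xs) with ha
    by_cases h0 : a = 0
    · have hx0 : x = 0 := by
        by_contra hx
        have : 0 < Nat.choose (x+0+L) (0+L+1) := Nat.choose_pos (by omega)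
        simp only [ha, rnkA_cons, ← hL] at h0
        omega
      have h0' : rnkA 0 xs = 0 := by
        simp only [ha, rnkA_cons, ← hL] at h0; omega
      have z := rnkA_zero_of (x :: xs) h (by rw [← ha, h0])
      simp only [List.length_cons, macaulay, h0, if_pos]
      omega
    · -- find greatest = x + L
      have hble : Nat.choose (x+0+L) (0+L+1) ≤ a := by
        simp only [ha, rnkA_cons, ← hL]; omega
      have hub : a + 1 ≤ Nat.choose (x + L + 1) (L + 1) := by
        have hball := rnkA_ub x 0 xs (List.pairwise_cons.1 h).1
        rw [← hL, show x + 0 + L = x + L by omega, show (0:ℕ) + L = L by omega] at hball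
        have hp : Nat.choose (x + L + 1) (L + 1) =
            Nat.choose (x + L) L + Nat.choose (x + L) (L + 1) := Nat.choose_succ_succ _ _
        simp only [ha, rnkA_cons, ← hL]
        have e1 : x + 0 + L = x + L := by omega
        have e2 : (0:ℕ) + L + 1 = L + 1 := by omega
        have e3 : (0:ℕ) + L = L := by omega
        rw [e1, e2] at hble
        rw [e1, e2]
        omega
      have hfg : Nat.findGreatest (fun k => Nat.choose k (L + 1) ≤ a) (a + L + 1) = x + L := by
        rw [Nat.findGreatest_eq_iff]
        refine ⟨?_, fun _ => by simpa using hble, fun n hn _ hP => ?_⟩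
        · -- x + L ≤ a + L + 1
          rcases Nat.eq_zero_or_pos x with rfl | hx
          · omega
          · have := choose_ge_self (L := L) hx
            have : x ≤ a := le_trans this (by simpa using hble)
            omega
        · have : Nat.choose (x + L + 1) (L + 1) ≤ Nat.choose n (L + 1) :=
            Nat.choose_le_choose _ (by omega)
          omega
      have hsub : a - Nat.choose (x + L) (L + 1) = rnkA 0 xs := by
        simp only [ha, rnkA_cons, ← hL]
        have e1 : x + 0 + L = x + L := by omega
        have e2 : (0:ℕ) + L + 1 = L + 1 := by omega
        rw [e1, e2]; omega
      show macaulay (L + 1) a = rnkA 1 (x :: xs)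
      rw [macaulay, if_neg h0]
      simp only [hfg, hsub, ih]
      simp only [rnkA_cons, ← hL]
      have e1 : x + 1 + L = x + L + 1 := by omega
      have e2 : (1:ℕ) + L + 1 = L + 2 := by omega
      rw [e1, e2]

end S9

namespace S9

lemma rnk_lt_head (s : ℕ) {u v : ℕ} {us vs : List ℕ} (hlen : us.length = vs.length)
    (hsu : List.Pairwise (· ≥ ·) (u :: us)) (huv : u < v) :
    rnkA s (u :: us) < rnkA s (v :: vs) := by
  have hub := rnkA_ub u s (u :: us) (sorted_mem_le hsu)
  rw [List.length_cons, hlen, show s + (vs.length+1) = s + vs.length + 1 by omega,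
    show u + s + (vs.length+1) = u + s + vs.length + 1 by omega] at hub
  have hc : Nat.choose (u + s + vs.length + 1) (s + vs.length + 1) ≤
      Nat.choose (v + s + vs.length) (s + vs.length + 1) :=
    Nat.choose_le_choose _ (by omega)
  have hlow : rnkA s (v :: vs) =
      Nat.choose (v + s + vs.length) (s + vs.length + 1) + rnkA s vs := rnkA_cons _ _ _
  omega

lemma rnk_mono : ∀ l1 l2 : List ℕ, List.Pairwise (· ≥ ·) l1 → List.Pairwise (· ≥ ·) l2 →
    l1.length = l2.length → rnkA 0 l1 ≤ rnkA 0 l2 → rnkA 1 l1 ≤ rnkA 1 l2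
  | [], [], _, _, _, _ => le_refl _
  | x :: xs, y :: ys, h1, h2, hlen, hle => by
    have hL : xs.length = ys.length := by simpa using hlen
    rcases lt_trichotomy x y with hxy | rfl | hxy
    · exact le_of_lt (rnk_lt_head 1 hL h1 hxy)
    · have hxs : rnkA 0 xs ≤ rnkA 0 ys := by
        simp only [rnkA_cons, hL] at hle; omega
      have ih := rnk_mono xs ys (List.pairwise_cons.1 h1).2 (List.pairwise_cons.1 h2).2 hL hxs
      simp only [rnkA_cons, hL]
      omega
    · exact absurd hle (not_le.2 (rnk_lt_head 0 hL.symm h2 hxy))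

lemma rnk_inj : ∀ l1 l2 : List ℕ, List.Pairwise (· ≥ ·) l1 → List.Pairwise (· ≥ ·) l2 →
    l1.length = l2.length → rnkA 0 l1 = rnkA 0 l2 → l1 = l2
  | [], [], _, _, _, _ => rfl
  | x :: xs, y :: ys, h1, h2, hlen, heq => by
    have hL : xs.length = ys.length := by simpa using hlen
    rcases lt_trichotomy x y with hxy | rfl | hxy
    · exact absurd heq (Nat.ne_of_lt (rnk_lt_head 0 hL h1 hxy))
    · have hxs : rnkA 0 xs = rnkA 0 ys := by
        simp only [rnkA_cons, hL] at heq; omega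
      rw [rnk_inj xs ys (List.pairwise_cons.1 h1).2 (List.pairwise_cons.1 h2).2 hL hxs]
    · exact absurd heq.symm (Nat.ne_of_lt (rnk_lt_head 0 hL.symm h2 hxy))

def unrk : ℕ → ℕ → List ℕ
  | 0, _ => []
  | h+1, a =>
    let m := Nat.findGreatest (fun k => Nat.choose k (h+1) ≤ a) (a+h+1)
    (m - h) :: unrk h (a - Nat.choose m (h+1))

@[simp] lemma unrk_length : ∀ h a, (unrk h a).length = h
  | 0, _ => rfl
  | h+1, a => by simp [unrk, unrk_length h]

end S9

namespace S9

lemma fG_facts (h a : ℕ) :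
    h ≤ Nat.findGreatest (fun k => Nat.choose k (h+1) ≤ a) (a+h+1) ∧
    Nat.choose (Nat.findGreatest (fun k => Nat.choose k (h+1) ≤ a) (a+h+1)) (h+1) ≤ a ∧
    a < Nat.choose ((Nat.findGreatest (fun k => Nat.choose k (h+1) ≤ a) (a+h+1)) + 1) (h+1) := by
  set P : ℕ → Prop := fun k => Nat.choose k (h+1) ≤ a with hP
  set m := Nat.findGreatest P (a+h+1) with hm
  have hPh : P h := by simp only [hP]; rw [Nat.choose_eq_zero_of_lt (by omega)]; omega
  have h1 : h ≤ m := Nat.le_findGreatest (by omega) hPh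
  have h2 : P m := Nat.findGreatest_spec (m := h) (by omega) hPh
  have hle : m ≤ a + h + 1 := Nat.findGreatest_le _
  have hbig : a + 1 ≤ Nat.choose (a+h+1) (h+1) := by
    have hsymm := Nat.choose_symm (show h+1 ≤ a+h+1 by omega)
    rw [show a+h+1-(h+1) = a by omega] at hsymm
    calc a + 1 = Nat.choose (a+1) a := (Nat.choose_succ_self_right a).symm
    _ ≤ Nat.choose (a+h+1) a := Nat.choose_le_choose _ (by omega)
    _ = Nat.choose (a+h+1) (h+1) := hsymm
  have hma : m ≤ a + h := by
    rcases Nat.lt_or_ge m (a+h+1) with hlt | hge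
    · omega
    · exfalso; have : m = a+h+1 := by omega
      rw [this] at h2; simp only [hP] at h2; omega
  have h3 : ¬ P (m+1) := Nat.findGreatest_is_greatest (P := P) (n := a+h+1) (by omega) (by omega)
  simp only [hP] at h2 h3
  exact ⟨h1, h2, by omega⟩

lemma unrk_mem_le : ∀ h a n, a < Nat.choose (n + h) h → ∀ x ∈ unrk h a, x ≤ n
  | 0, _, _, _, _, hx => absurd hx (List.not_mem_nil)
  | h+1, a, n, hlt, x, hx => by
    obtain ⟨h1, h2, h3⟩ := fG_facts h a
    set m := Nat.findGreatest (fun k => Nat.choose k (h+1) ≤ a) (a+h+1) with hm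
    have hmn : m < n + (h+1) := by
      by_contra hge
      have : Nat.choose (n+(h+1)) (h+1) ≤ Nat.choose m (h+1) :=
        Nat.choose_le_choose _ (by omega)
      omega
    have hpas : Nat.choose (m+1) (h+1) = Nat.choose m h + Nat.choose m (h+1) :=
      Nat.choose_succ_succ _ _
    have ha' : a - Nat.choose m (h+1) < Nat.choose (n + h) h := by
      have h4 : a - Nat.choose m (h+1) < Nat.choose m h := by omega
      have : Nat.choose m h ≤ Nat.choose (n+h) h := Nat.choose_le_choose _ (by omega)
      omega
    simp only [unrk, List.mem_cons, ← hm] at hx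
    rcases hx with rfl | hx
    · omega
    · exact unrk_mem_le h _ n ha' x hx

lemma unrk_sorted : ∀ h a, List.Pairwise (· ≥ ·) (unrk h a)
  | 0, _ => List.Pairwise.nil
  | h+1, a => by
    obtain ⟨h1, h2, h3⟩ := fG_facts h a
    set m := Nat.findGreatest (fun k => Nat.choose k (h+1) ≤ a) (a+h+1) with hm
    have hpas : Nat.choose (m+1) (h+1) = Nat.choose m h + Nat.choose m (h+1) :=
      Nat.choose_succ_succ _ _
    have ha' : a - Nat.choose m (h+1) < Nat.choose ((m-h) + h) h := by
      rw [show m-h+h = m by omega]; omega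
    show List.Pairwise _ ((m - h) :: unrk h (a - Nat.choose m (h+1)))
    exact List.pairwise_cons.2 ⟨unrk_mem_le h _ _ ha', unrk_sorted h _⟩

lemma unrk_rnk : ∀ h a, (h = 0 → a = 0) → rnkA 0 (unrk h a) = a
  | 0, a, h0 => by simp [unrk, h0]
  | h+1, a, _ => by
    obtain ⟨h1, h2, h3⟩ := fG_facts h a
    set m := Nat.findGreatest (fun k => Nat.choose k (h+1) ≤ a) (a+h+1) with hm
    have hpas : Nat.choose (m+1) (h+1) = Nat.choose m h + Nat.choose m (h+1) :=
      Nat.choose_succ_succ _ _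
    have ih := unrk_rnk h (a - Nat.choose m (h+1)) (by
      intro h0; subst h0
      simp only [Nat.choose_zero_right] at hpas
      omega)
    show rnkA 0 ((m - h) :: unrk h (a - Nat.choose m (h+1))) = a
    rw [rnkA_cons, ih, unrk_length, show m-h+0+h = m by omega, show 0+h+1 = h+1 by omega]
    omega

lemma macaulay_mono (h : ℕ) {a b : ℕ} (hab : a ≤ b) : macaulay h a ≤ macaulay h b := by
  cases h with
  | zero => exact le_refl 0
  | succ h =>
    have e1 := unrk_rnk (h+1) a (by omega)
    have e2 := unrk_rnk (h+1) b (by omega)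
    have m1 := macaulay_rnk (unrk (h+1) a) (unrk_sorted _ _)
    have m2 := macaulay_rnk (unrk (h+1) b) (unrk_sorted _ _)
    rw [unrk_length, e1] at m1
    rw [unrk_length, e2] at m2
    rw [m1, m2]
    exact rnk_mono _ _ (unrk_sorted _ _) (unrk_sorted _ _) (by simp) (by rw [e1, e2]; exact hab)

end S9

namespace S9

def mrank (m : Multiset ℕ) : ℕ := rnkA 0 (m.sort (· ≥ ·))

lemma sort_cons (v : ℕ) (m : Multiset ℕ) :
    (v ::ₘ m).sort (· ≥ ·) = insD v (m.sort (· ≥ ·)) := by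
  have hperm : ((v ::ₘ m).sort (· ≥ ·)).Perm (insD v (m.sort (· ≥ ·))) := by
    rw [← Multiset.coe_eq_coe, Multiset.sort_eq]
    have : (insD v (m.sort (· ≥ ·)) : Multiset ℕ) = ↑(v :: m.sort (· ≥ ·)) :=
      Multiset.coe_eq_coe.2 (insD_perm _ _)
    rw [this, ← Multiset.cons_coe, Multiset.sort_eq]
  exact List.Perm.eq_of_pairwise' (Multiset.pairwise_sort _ _)
    (insD_sorted v _ (Multiset.pairwise_sort _ _)) hperm

@[simp] lemma mrank_singleton (v : ℕ) : mrank {v} = v := by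
  simp [mrank, Multiset.sort_singleton, rnkA]

lemma mrank_cons_ge (v : ℕ) (m : Multiset ℕ) :
    macaulay (Multiset.card m) (mrank m) ≤ mrank (v ::ₘ m) := by
  have h1 : macaulay (Multiset.card m) (mrank m) = rnkA 1 (m.sort (· ≥ ·)) := by
    rw [show mrank m = rnkA 0 (m.sort (· ≥ ·)) from rfl,
      ← Multiset.length_sort (· ≥ ·) (s := m)]
    exact macaulay_rnk _ (Multiset.pairwise_sort _ _)
  rw [show mrank (v ::ₘ m) = rnkA 0 ((v ::ₘ m).sort (· ≥ ·)) from rfl, sort_cons, h1]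
  exact rnkA_insD v _ (Multiset.pairwise_sort _ _)

lemma mrank_inj {m1 m2 : Multiset ℕ} (hc : Multiset.card m1 = Multiset.card m2)
    (hr : mrank m1 = mrank m2) : m1 = m2 := by
  have := rnk_inj (m1.sort (· ≥ ·)) (m2.sort (· ≥ ·)) (Multiset.pairwise_sort _ _)
    (Multiset.pairwise_sort _ _) (by rw [Multiset.length_sort, Multiset.length_sort, hc]) hr
  rw [← Multiset.sort_eq m1 (· ≥ ·), ← Multiset.sort_eq m2 (· ≥ ·), this]

def munrk (h a : ℕ) : Multiset ℕ := (unrk h a : Multiset ℕ)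

@[simp] lemma munrk_card (h a : ℕ) : Multiset.card (munrk h a) = h := by
  simp [munrk]

lemma munrk_mrank (h a : ℕ) (hh : h ≠ 0 ∨ a = 0) : mrank (munrk h a) = a := by
  have hsort : (munrk h a).sort (· ≥ ·) = unrk h a := by
    apply List.Perm.eq_of_pairwise' (Multiset.pairwise_sort _ _) (unrk_sorted h a)
    rw [← Multiset.coe_eq_coe, Multiset.sort_eq]; rfl
  rw [mrank, hsort]
  exact unrk_rnk h a (by tauto)

section Semigroup

variable (d : ℕ → ℕ)

abbrev GT : Type := {m : Multiset ℕ // m ≠ 0} ⊕ Unit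

lemma add_ne {m1 m2 : Multiset ℕ} (h1 : m1 ≠ 0) : m1 + m2 ≠ 0 := by
  rw [← Multiset.card_pos] at h1 ⊢
  rw [Multiset.card_add]; omega

def gadd : GT → GT → GT
  | Sum.inl m, Sum.inl m' =>
      if mrank (m.1 + m'.1) < d (Multiset.card (m.1 + m'.1)) then
        Sum.inl ⟨m.1 + m'.1, add_ne m.2⟩
      else Sum.inr ()
  | _, _ => Sum.inr ()

variable {d} (hd : ∀ i : ℕ, 1 ≤ i → d (i + 1) ≤ macaulay i (d i))

include hd

lemma chain {m1 : Multiset ℕ} (h1 : m1 ≠ 0) (hr : d (Multiset.card m1) ≤ mrank m1) :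
    ∀ m2 : Multiset ℕ, d (Multiset.card m1 + Multiset.card m2) ≤ mrank (m1 + m2) := by
  intro m2
  induction m2 using Multiset.induction_on with
  | empty => simpa using hr
  | cons a s ih =>
    have hcard1 : 1 ≤ Multiset.card m1 := by
      rw [← Multiset.card_pos] at h1; omega
    have e : m1 + (a ::ₘ s) = a ::ₘ (m1 + s) := by
      rw [Multiset.add_cons]
    rw [e]
    have k1 := mrank_cons_ge a (m1 + s)
    have k2 : macaulay (Multiset.card (m1 + s)) (d (Multiset.card m1 + Multiset.card s)) ≤
        macaulay (Multiset.card (m1 + s)) (mrank (m1 + s)) := macaulay_mono _ (ih)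
    have k3 := hd (Multiset.card m1 + Multiset.card s) (by omega)
    rw [Multiset.card_add] at k1 k2
    simp only [Multiset.card_cons, Multiset.card_add]
    rw [← Nat.add_assoc]
    omega

lemma okP {m1 m2 : Multiset ℕ} (h1 : m1 ≠ 0) (h2 : m2 ≠ 0)
    (hok : mrank (m1 + m2) < d (Multiset.card (m1 + m2))) :
    mrank m1 < d (Multiset.card m1) := by
  by_contra hge
  have := chain hd h1 (by omega) m2
  rw [Multiset.card_add] at hok
  omega

end Semigroup

end S9

namespace S9

variable (d : ℕ → ℕ)

def gaddM (s : Multiset ℕ) (hs : s ≠ 0) : GT :=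
  if mrank s < d (Multiset.card s) then Sum.inl ⟨s, hs⟩ else Sum.inr ()

lemma gaddM_eq {s t : Multiset ℕ} (hs : s ≠ 0) (ht : t ≠ 0) (h : s = t) :
    gaddM d s hs = gaddM d t ht := by subst h; rfl

lemma gadd_inl (m m' : {m : Multiset ℕ // m ≠ 0}) :
    gadd d (Sum.inl m) (Sum.inl m') = gaddM d (m.1 + m'.1) (add_ne m.2) := rfl

lemma gadd_inr_left (x : GT) : gadd d (Sum.inr ()) x = Sum.inr () := by
  cases x <;> rfl

lemma gadd_inr_right (x : GT) : gadd d x (Sum.inr ()) = Sum.inr () := by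
  cases x <;> rfl

def gsg (hd : ∀ i : ℕ, 1 ≤ i → d (i + 1) ≤ macaulay i (d i)) : AddCommSemigroup GT where
  add := gadd d
  add_comm := by
    intro a b
    cases a with
    | inr u => cases u; show gadd d _ _ = gadd d _ _
               rw [gadd_inr_left, gadd_inr_right]
    | inl m => cases b with
      | inr u => cases u; show gadd d _ _ = gadd d _ _
                 rw [gadd_inr_left, gadd_inr_right]
      | inl m' => show gadd d _ _ = gadd d _ _
                  rw [gadd_inl, gadd_inl]
                  exact gaddM_eq d _ _ (add_comm _ _)
  add_assoc := by
    intro a b c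
    show gadd d (gadd d a b) c = gadd d a (gadd d b c)
    cases a with
    | inr u => cases u; simp only [gadd_inr_left, gadd_inr_right]
    | inl m1 => cases b with
      | inr u => cases u; simp only [gadd_inr_left, gadd_inr_right]
      | inl m2 => cases c with
        | inr u => cases u
                   simp only [gadd_inr_left, gadd_inr_right]
        | inl m3 =>
          by_cases h12 : mrank (m1.1 + m2.1) < d (Multiset.card (m1.1 + m2.1))
          · have e12 : gadd d (Sum.inl m1) (Sum.inl m2) = Sum.inl ⟨m1.1 + m2.1, add_ne m1.2⟩ :=
              if_pos h12
            rw [e12]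
            by_cases h23 : mrank (m2.1 + m3.1) < d (Multiset.card (m2.1 + m3.1))
            · have e23 : gadd d (Sum.inl m2) (Sum.inl m3) = Sum.inl ⟨m2.1 + m3.1, add_ne m2.2⟩ :=
                if_pos h23
              rw [e23]
              show gaddM d (m1.1 + m2.1 + m3.1) (add_ne (add_ne m1.2)) =
                gaddM d (m1.1 + (m2.1 + m3.1)) (add_ne m1.2)
              exact gaddM_eq d _ _ (add_assoc _ _ _)
            · have e23 : gadd d (Sum.inl m2) (Sum.inl m3) = Sum.inr () := if_neg h23
              rw [e23, gadd_inr_right]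
              show gaddM d (m1.1 + m2.1 + m3.1) (add_ne (add_ne m1.2)) = Sum.inr ()
              refine if_neg (fun hok => h23 (okP hd (add_ne m2.2) m1.2 ?_))
              rw [show m2.1 + m3.1 + m1.1 = m1.1 + m2.1 + m3.1 from
                (add_comm _ _).trans (add_assoc _ _ _).symm]
              exact hok
          · have e12 : gadd d (Sum.inl m1) (Sum.inl m2) = Sum.inr () := if_neg h12
            rw [e12, gadd_inr_left]
            by_cases h23 : mrank (m2.1 + m3.1) < d (Multiset.card (m2.1 + m3.1))
            · have e23 : gadd d (Sum.inl m2) (Sum.inl m3) = Sum.inl ⟨m2.1 + m3.1, add_ne m2.2⟩ :=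
                if_pos h23
              rw [e23]
              symm
              show gaddM d (m1.1 + (m2.1 + m3.1)) (add_ne m1.2) = Sum.inr ()
              refine if_neg (fun hok => h12 (okP hd (add_ne m1.2) m3.2 ?_))
              rw [← add_assoc] at hok
              exact hok
            · have e23 : gadd d (Sum.inl m2) (Sum.inl m3) = Sum.inr () := if_neg h23
              rw [e23, gadd_inr_right]

end S9

namespace S9

variable (d : ℕ → ℕ)

def ES (h : ℕ) : Set GT :=
  {x | ∃ mm : {m : Multiset ℕ // m ≠ 0},
    Multiset.card mm.1 = h ∧ mrank mm.1 < d h ∧ x = Sum.inl mm}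

lemma munrk_ne {h : ℕ} (a : ℕ) (hh : 1 ≤ h) : munrk h a ≠ 0 := by
  intro h0
  have := munrk_card h a
  rw [h0] at this
  simp at this
  omega

def esFun (h : ℕ) (hh : 1 ≤ h) (i : Fin (d h)) : ↥(ES d h) :=
  ⟨Sum.inl ⟨munrk h i.1, munrk_ne i.1 hh⟩,
   ⟨⟨munrk h i.1, munrk_ne i.1 hh⟩, munrk_card h i.1,
    by rw [munrk_mrank h i.1 (Or.inl (by omega))]; exact i.2, rfl⟩⟩

lemma esFun_bij (h : ℕ) (hh : 1 ≤ h) : Function.Bijective (esFun d h hh) := by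
  constructor
  · intro i j hij
    simp only [esFun, Subtype.ext_iff, Sum.inl.injEq] at hij
    have : mrank (munrk h i.1) = mrank (munrk h j.1) := by rw [hij]
    rw [munrk_mrank h i.1 (Or.inl (by omega)), munrk_mrank h j.1 (Or.inl (by omega))] at this
    exact Fin.ext this
  · rintro ⟨x, mm, hc, hr, rfl⟩
    refine ⟨⟨mrank mm.1, hr⟩, ?_⟩
    have hval : munrk h (mrank mm.1) = mm.1 :=
      mrank_inj (by rw [munrk_card, hc]) (munrk_mrank h _ (Or.inl (by omega)))
    simp only [esFun, Subtype.ext_iff, Sum.inl.injEq]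
    exact hval

lemma ES_ncard (h : ℕ) (hh : 1 ≤ h) : Nat.card ↥(ES d h) = d h := by
  rw [← Nat.card_eq_of_bijective _ (esFun_bij d h hh)]
  simp

lemma ES_finite (h : ℕ) (hh : 1 ≤ h) : (ES d h).Finite :=
  Set.finite_coe_iff.mp (Finite.of_surjective _ (esFun_bij d h hh).surjective)

variable {d} (hd : ∀ i : ℕ, 1 ≤ i → d (i + 1) ≤ macaulay i (d i))
include hd

lemma lower : ∀ h : ℕ, 1 ≤ h → ES d h ⊆ @iterSumset GT (gsg d hd) (ES d 1) h := by
  letI : AddCommSemigroup GT := gsg d hd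
  intro h
  induction h with
  | zero => omega
  | succ h ih =>
    intro _
    rcases Nat.eq_zero_or_pos h with rfl | hpos
    · exact fun x hx => hx
    · rintro x ⟨⟨m, hm0⟩, hc, hr, rfl⟩
      simp only at hc hr
      obtain ⟨v, hv⟩ := Multiset.exists_mem_of_ne_zero hm0
      obtain ⟨m', rfl⟩ := Multiset.exists_cons_of_mem hv
      have hcm' : Multiset.card m' = h := by
        rw [Multiset.card_cons] at hc; omega
      have hm' : m' ≠ 0 := by
        intro h0; rw [h0] at hcm'; simp at hcm'; omega
      have he : m' + {v} = v ::ₘ m' := by rw [add_comm, Multiset.singleton_add]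
      have hok' : mrank m' < d h := by
        have := okP hd hm' (Multiset.singleton_ne_zero v) (by
          rw [he, Multiset.card_cons, hcm']; exact hr)
        rwa [hcm'] at this
      have hv1 : mrank {v} < d 1 := by
        have := okP hd (Multiset.singleton_ne_zero v) hm' (by
          rw [Multiset.singleton_add, Multiset.card_cons, hcm']
          exact hr)
        rwa [Multiset.card_singleton] at this
      have hmem1 : (Sum.inl ⟨m', hm'⟩ : GT) ∈ @iterSumset GT (gsg d hd) (ES d 1) h :=
        ih hpos ⟨⟨m', hm'⟩, hcm', hok', rfl⟩
      have hmem2 : (Sum.inl ⟨{v}, Multiset.singleton_ne_zero v⟩ : GT) ∈ ES d 1 :=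
        ⟨⟨{v}, Multiset.singleton_ne_zero v⟩, Multiset.card_singleton v, hv1, rfl⟩
      have hsum : (Sum.inl ⟨m', hm'⟩ : GT) + Sum.inl ⟨{v}, Multiset.singleton_ne_zero v⟩ =
          Sum.inl ⟨v ::ₘ m', hm0⟩ := by
        show gadd d _ _ = _
        rw [gadd_inl, gaddM_eq d (add_ne hm') (by rw [← he]; exact add_ne hm') he]
        show (if mrank (v ::ₘ m') < d (Multiset.card (v ::ₘ m')) then _ else _) = _
        rw [Multiset.card_cons, hcm', if_pos hr]
      have hstep : @iterSumset GT (gsg d hd) (ES d 1) (h + 1) =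
          @iterSumset GT (gsg d hd) (ES d 1) h + ES d 1 := by
        obtain ⟨k, rfl⟩ : ∃ k, h = k + 1 := ⟨h - 1, by omega⟩
        rfl
      rw [hstep, ← hsum]
      exact Set.add_mem_add hmem1 hmem2

end S9

namespace S9

variable {d : ℕ → ℕ} (hd : ∀ i : ℕ, 1 ≤ i → d (i + 1) ≤ macaulay i (d i))
include hd

lemma upper : ∀ h : ℕ, 1 ≤ h →
    @iterSumset GT (gsg d hd) (ES d 1) h ⊆ ES d h ∪ {Sum.inr ()} := by
  letI : AddCommSemigroup GT := gsg d hd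
  intro h
  induction h with
  | zero => omega
  | succ h ih =>
    intro _
    rcases Nat.eq_zero_or_pos h with rfl | hpos
    · exact fun x hx => Or.inl hx
    · have hstep : @iterSumset GT (gsg d hd) (ES d 1) (h + 1) =
          @iterSumset GT (gsg d hd) (ES d 1) h + ES d 1 := by
        obtain ⟨k, rfl⟩ : ∃ k, h = k + 1 := ⟨h - 1, by omega⟩
        rfl
      rw [hstep]
      rintro x hx
      rw [Set.mem_add] at hx
      obtain ⟨y, hy, z, hz, rfl⟩ := hx
      obtain ⟨vv, hc1, hr1, rfl⟩ := hz
      rcases ih hpos hy with hyE | hyR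
      · obtain ⟨mm, hc, hr, rfl⟩ := hyE
        show gadd d (Sum.inl mm) (Sum.inl vv) ∈ _
        rw [gadd_inl]
        unfold gaddM
        split
        · left
          refine ⟨⟨mm.1 + vv.1, add_ne mm.2⟩, ?_, ?_, rfl⟩
          · rw [Multiset.card_add, hc, hc1]
          · rename_i hcond
            rwa [Multiset.card_add, hc, hc1] at hcond
        · right; rfl
      · rcases hyR with rfl
        right
        show gadd d (Sum.inr ()) (Sum.inl vv) ∈ _
        rw [gadd_inr_left]
        rfl

end S9


/-- Almost sharp realization. Let `(d_i)_{i≥0}` be a sequence of nonnegative integers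
with `d_0 = 1` and `d_{i+1} ≤ d_i^⟨i⟩` for all `i ≥ 1`. Then there exists an abelian
semigroup `G` and a finite subset `A ⊆ G` such that `d_h ≤ |hA| ≤ d_h + 1` for all
`h ≥ 1` (for `h = 0` the bounds hold trivially, `0A` being a singleton and `d_0 = 1`). -/
theorem stmt9 (d : ℕ → ℕ) (hd0 : d 0 = 1)
    (hd : ∀ i : ℕ, 1 ≤ i → d (i + 1) ≤ macaulay i (d i)) :
    ∃ (G : Type) (iG : AddCommSemigroup G) (A : Set G), A.Finite ∧
      ∀ h : ℕ, 1 ≤ h →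
        d h ≤ Nat.card (@iterSumset G iG A h) ∧ Nat.card (@iterSumset G iG A h) ≤ d h + 1 := by
  classical
  refine ⟨S9.GT, S9.gsg d hd, S9.ES d 1, S9.ES_finite d 1 le_rfl, fun h hh => ?_⟩
  have hlow := S9.lower hd h hh
  have hupp := S9.upper hd h hh
  have hfinE : (S9.ES d h).Finite := S9.ES_finite d h hh
  have hfinU : (S9.ES d h ∪ {Sum.inr ()}).Finite := hfinE.union (Set.finite_singleton _)
  have hfinI : (@iterSumset S9.GT (S9.gsg d hd) (S9.ES d 1) h).Finite := hfinU.subset hupp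
  have hcardE : (S9.ES d h).ncard = d h := by
    rw [← Nat.card_coe_set_eq]; exact S9.ES_ncard d h hh
  constructor
  · rw [Nat.card_coe_set_eq]
    calc d h = (S9.ES d h).ncard := hcardE.symm
    _ ≤ (@iterSumset S9.GT (S9.gsg d hd) (S9.ES d 1) h).ncard := Set.ncard_le_ncard hlow hfinI
  · rw [Nat.card_coe_set_eq]
    calc (@iterSumset S9.GT (S9.gsg d hd) (S9.ES d 1) h).ncard
        ≤ (S9.ES d h ∪ {Sum.inr ()}).ncard := Set.ncard_le_ncard hupp hfinU
    _ ≤ (S9.ES d h).ncard + ({Sum.inr ()} : Set S9.GT).ncard := Set.ncard_union_le _ _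
    _ = d h + 1 := by rw [hcardE, Set.ncard_singleton]
end

section
/- Let I be a proper graded (homogeneous) ideal in S = K[X_1,...,X_n], and let in(I) be the monomial ideal generated by the leading monomials of the nonzero elements of I with respect to the graded lexicographic order with X_1 > ... > X_n. Then the graded algebras S/I and S/in(I) have the same Hilbert function; equivalently, for every degree d, dim_K (I ∩ S_d) = dim_K (in(I) ∩ S_d). -/
/-- `σ` is the leading monomial of `f` (w.r.t. graded lex): it occurs in `f` with nonzero
coefficient and dominates every monomial occurring in `f`. -/
def IsLeadingMonomial {K : Type*} [Field K] {n : ℕ} (f : MvPolynomial (Fin n) K)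
    (σ : Fin n →₀ ℕ) : Prop :=
  MvPolynomial.coeff σ f ≠ 0 ∧ ∀ τ, MvPolynomial.coeff τ f ≠ 0 → glexLe τ σ

/-- `in(I)`: the monomial ideal generated by the leading monomials of the nonzero
elements of `I`. -/
noncomputable def leadIdeal {K : Type*} [Field K] {n : ℕ} (I : Ideal (MvPolynomial (Fin n) K)) :
    Ideal (MvPolynomial (Fin n) K) :=
  Ideal.span ((fun σ => MvPolynomial.monomial σ (1 : K)) ''
    {σ | ∃ f ∈ I, f ≠ 0 ∧ IsLeadingMonomial f σ})

namespace GlexAux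

variable {n : ℕ}

theorem glexLt_irrefl (u : Fin n →₀ ℕ) : ¬ glexLt u u := by
  rintro (h | ⟨-, j, hj, -⟩)
  · exact lt_irrefl _ h
  · exact lt_irrefl _ hj

theorem glexLt_trans {u v w : Fin n →₀ ℕ} (h1 : glexLt u v) (h2 : glexLt v w) :
    glexLt u w := by
  rcases h1 with h1 | ⟨hd1, j1, hj1, hp1⟩
  · rcases h2 with h2 | ⟨hd2, -⟩
    · exact Or.inl (h1.trans h2)
    · exact Or.inl (hd2 ▸ h1)
  · rcases h2 with h2 | ⟨hd2, j2, hj2, hp2⟩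
    · exact Or.inl (hd1 ▸ h2)
    · refine Or.inr ⟨hd1.trans hd2, ?_⟩
      rcases lt_trichotomy j1 j2 with h | h | h
      · exact ⟨j1, by rw [← hp2 j1 h]; exact hj1, fun k hk => (hp1 k hk).trans (hp2 k (hk.trans h))⟩
      · subst h
        exact ⟨j1, hj1.trans hj2, fun k hk => (hp1 k hk).trans (hp2 k hk)⟩
      · exact ⟨j2, by rw [hp1 j2 h]; exact hj2, fun k hk => (hp1 k (hk.trans h)).trans (hp2 k hk)⟩

theorem glexLt_asymm {u v : Fin n →₀ ℕ} (h : glexLt u v) : ¬ glexLt v u :=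
  fun h' => glexLt_irrefl u (glexLt_trans h h')

theorem glexLt_or_glexLt {u v : Fin n →₀ ℕ} (h : u ≠ v) : glexLt u v ∨ glexLt v u := by
  rcases lt_trichotomy (mdeg u) (mdeg v) with hd | hd | hd
  · exact Or.inl (Or.inl hd)
  · have hne : ∃ j, u j ≠ v j := by
      by_contra hc
      push_neg at hc
      exact h (Finsupp.ext hc)
    classical
    obtain ⟨j, hj⟩ := hne
    have hnon : (Finset.univ.filter (fun j : Fin n => u j ≠ v j)).Nonempty :=
      ⟨j, by simp [hj]⟩
    set j0 := (Finset.univ.filter (fun j : Fin n => u j ≠ v j)).min' hnon with hj0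
    have hj0mem : u j0 ≠ v j0 := by
      have := Finset.min'_mem _ hnon
      simpa using this
    have hpre : ∀ k, k < j0 → u k = v k := by
      intro k hk
      by_contra hc
      have : j0 ≤ k := Finset.min'_le _ _ (by simp [hc])
      exact absurd hk (not_lt.mpr this)
    rcases lt_or_gt_of_ne hj0mem with hlt | hgt
    · exact Or.inl (Or.inr ⟨hd, j0, hlt, hpre⟩)
    · exact Or.inr (Or.inr ⟨hd.symm, j0, hgt, fun k hk => (hpre k hk).symm⟩)
  · exact Or.inr (Or.inl hd)

theorem glexLe_antisymm {u v : Fin n →₀ ℕ} (h1 : glexLe u v) (h2 : glexLe v u) : u = v := by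
  rcases h1 with rfl | h1
  · rfl
  rcases h2 with rfl | h2
  · rfl
  exact absurd h2 (glexLt_asymm h1)

theorem mdeg_add (u v : Fin n →₀ ℕ) : mdeg (u + v) = mdeg u + mdeg v := by
  simp [mdeg, Finset.sum_add_distrib]

theorem glexLt_add_right {u v : Fin n →₀ ℕ} (w : Fin n →₀ ℕ) (h : glexLt u v) :
    glexLt (u + w) (v + w) := by
  rcases h with h | ⟨hd, j, hj, hp⟩
  · exact Or.inl (by rw [mdeg_add, mdeg_add]; omega)
  · refine Or.inr ⟨by rw [mdeg_add, mdeg_add, hd], j, by simpa using hj, fun k hk => ?_⟩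
    simp [hp k hk]

theorem glexLe_add_right {u v : Fin n →₀ ℕ} (w : Fin n →₀ ℕ) (h : glexLe u v) :
    glexLe (u + w) (v + w) := by
  rcases h with rfl | h
  · exact Or.inl rfl
  · exact Or.inr (glexLt_add_right w h)

theorem finset_max (s : Finset (Fin n →₀ ℕ)) (hs : s.Nonempty) :
    ∃ σ ∈ s, ∀ τ ∈ s, glexLe τ σ := by
  classical
  induction s using Finset.induction_on with
  | empty => exact absurd hs (by simp)
  | @insert a s ha ih =>
    rcases s.eq_empty_or_nonempty with rfl | hs'
    · exact ⟨a, by simp, by simp [glexLe]⟩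
    · obtain ⟨σ, hσs, hσ⟩ := ih hs'
      rcases eq_or_ne a σ with rfl | hne
      · exact ⟨a, by simp [hσs], by
          intro τ hτ
          rcases Finset.mem_insert.mp hτ with rfl | hτ
          · exact Or.inl rfl
          · exact hσ τ hτ⟩
      · rcases glexLt_or_glexLt hne with h | h
        · refine ⟨σ, by simp [hσs], ?_⟩
          intro τ hτ
          rcases Finset.mem_insert.mp hτ with rfl | hτ
          · exact Or.inr h
          · exact hσ τ hτ
        · refine ⟨a, by simp, ?_⟩
          intro τ hτ
          rcases Finset.mem_insert.mp hτ with rfl | hτ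
          · exact Or.inl rfl
          · rcases hσ τ hτ with rfl | h'
            · exact Or.inr h
            · exact Or.inr (glexLt_trans h' h)

open MvPolynomial

variable {K : Type*} [Field K]

theorem exists_LM {f : MvPolynomial (Fin n) K} (hf : f ≠ 0) :
    ∃ σ, IsLeadingMonomial f σ := by
  obtain ⟨σ, hσ, hmax⟩ := finset_max f.support (MvPolynomial.support_nonempty.mpr hf)
  exact ⟨σ, MvPolynomial.mem_support_iff.mp hσ,
    fun τ hτ => hmax τ (MvPolynomial.mem_support_iff.mpr hτ)⟩

theorem mdeg_eq_degree (σ : Fin n →₀ ℕ) : mdeg σ = σ.degree := by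
  rw [Finsupp.degree, mdeg]
  exact (Finset.sum_subset (Finset.subset_univ _)
    (fun x _ hx => Finsupp.notMem_support_iff.mp hx)).symm

theorem mdeg_of_hom {d : ℕ} {f : MvPolynomial (Fin n) K}
    (hf : f ∈ homogeneousSubmodule (Fin n) K d) {σ : Fin n →₀ ℕ}
    (hσ : coeff σ f ≠ 0) : mdeg σ = d := by
  rw [mem_homogeneousSubmodule] at hf
  rw [mdeg_eq_degree, Finsupp.degree_eq_weight_one]
  exact hf hσ

theorem LM_homComponent {f : MvPolynomial (Fin n) K} {σ : Fin n →₀ ℕ}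
    (h : IsLeadingMonomial f σ) :
    coeff σ (homogeneousComponent (mdeg σ) f) ≠ 0 ∧
      IsLeadingMonomial (homogeneousComponent (mdeg σ) f) σ := by
  have hc : coeff σ (homogeneousComponent (mdeg σ) f) = coeff σ f := by
    rw [coeff_homogeneousComponent, if_pos (mdeg_eq_degree σ).symm]
  refine ⟨by rw [hc]; exact h.1, by rw [hc]; exact h.1, fun τ hτ => ?_⟩
  rw [coeff_homogeneousComponent] at hτ
  exact h.2 τ (by by_contra hc'; simp [hc'] at hτ)

theorem LM_mul_monomial {g : MvPolynomial (Fin n) K} {σ : Fin n →₀ ℕ}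
    (h : IsLeadingMonomial g σ) (ρ : Fin n →₀ ℕ) :
    IsLeadingMonomial (g * monomial ρ (1 : K)) (σ + ρ) := by
  constructor
  · rw [coeff_mul_monomial, mul_one]
    exact h.1
  · intro τ hτ
    rw [coeff_mul_monomial'] at hτ
    by_cases hle : ρ ≤ τ
    · rw [if_pos hle, mul_one] at hτ
      have := glexLe_add_right ρ (h.2 _ hτ)
      rwa [tsub_add_cancel_of_le hle] at this
    · simp [hle] at hτ

end GlexAux

open MvPolynomial GlexAux in
set_option maxHeartbeats 2000000 in
/-- Macaulay: if `I` is a proper graded ideal of `S = K[X_1,…,X_n]`, then `S/I` and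
`S/in(I)` have the same Hilbert function; equivalently, for every degree `d`,
`dim_K (I ∩ S_d) = dim_K (in(I) ∩ S_d)`. -/
theorem stmt10 (K : Type*) [Field K] (n : ℕ) (I : Ideal (MvPolynomial (Fin n) K))
    (hproper : I ≠ ⊤)
    (hgraded : ∀ f ∈ I, ∀ d : ℕ, MvPolynomial.homogeneousComponent d f ∈ I) :
    ∀ d : ℕ,
      Module.finrank K
        ↥(Submodule.restrictScalars K I ⊓ MvPolynomial.homogeneousSubmodule (Fin n) K d)
      = Module.finrank K
        ↥(Submodule.restrictScalars K (leadIdeal I) ⊓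
            MvPolynomial.homogeneousSubmodule (Fin n) K d) := by
  classical
  intro d
  set LMset : Set (Fin n →₀ ℕ) := {σ | ∃ f ∈ I, f ≠ 0 ∧ IsLeadingMonomial f σ} with hLMset
  set L : Set (Fin n →₀ ℕ) :=
    {σ | ∃ f, f ∈ I ∧ f ∈ homogeneousSubmodule (Fin n) K d ∧ f ≠ 0 ∧ IsLeadingMonomial f σ}
    with hLdef
  have hLdeg : ∀ σ ∈ L, mdeg σ = d := by
    rintro σ ⟨f, -, hfhom, -, hflm⟩
    exact mdeg_of_hom hfhom hflm.1
  have hT : {σ : Fin n →₀ ℕ | mdeg σ = d}.Finite := by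
    have hsub : {σ : Fin n →₀ ℕ | mdeg σ = d} ⊆
        Set.range (fun g : Fin n → Fin (d+1) =>
          Finsupp.equivFunOnFinite.symm fun i => (g i : ℕ)) := by
      intro σ hσ
      have hle : ∀ i, σ i ≤ d := by
        intro i
        have h1 : σ i ≤ mdeg σ := Finset.single_le_sum (f := fun j => σ j)
          (fun _ _ => Nat.zero_le _) (Finset.mem_univ i)
        have h2 : mdeg σ = d := hσ
        omega
      refine ⟨fun i => ⟨σ i, Nat.lt_succ_of_le (hle i)⟩, ?_⟩
      simp only
      exact Finsupp.equivFunOnFinite_symm_coe σ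
    exact (Set.finite_range _).subset hsub
  have hLfin : L.Finite := hT.subset hLdeg
  haveI : Fintype ↥L := hLfin.fintype
  have hkey : ∀ μ : Fin n →₀ ℕ, mdeg μ = d → ((∃ σ ∈ LMset, σ ≤ μ) ↔ μ ∈ L) := by
    intro μ hμ
    constructor
    · rintro ⟨σ, ⟨f, hfI, hf0, hflm⟩, hσμ⟩
      obtain ⟨hgc, hglm⟩ := GlexAux.LM_homComponent hflm
      have hgI : homogeneousComponent (mdeg σ) f ∈ I := hgraded f hfI (mdeg σ)
      have hghom : (homogeneousComponent (mdeg σ) f).IsHomogeneous (mdeg σ) :=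
        homogeneousComponent_isHomogeneous _ _
      have hhlm : IsLeadingMonomial (homogeneousComponent (mdeg σ) f
          * monomial (μ - σ) (1 : K)) μ := by
        have := GlexAux.LM_mul_monomial hglm (μ - σ)
        rwa [add_tsub_cancel_of_le hσμ] at this
      refine ⟨_, I.mul_mem_right _ hgI, ?_, fun h0 => hhlm.1 (by rw [h0]; simp), hhlm⟩
      rw [mem_homogeneousSubmodule]
      have hmul : (homogeneousComponent (mdeg σ) f * monomial (μ - σ) (1 : K)).IsHomogeneous
          (mdeg σ + mdeg (μ - σ)) :=
        hghom.mul (isHomogeneous_monomial _ (GlexAux.mdeg_eq_degree _).symm)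
      rwa [← GlexAux.mdeg_add, add_tsub_cancel_of_le hσμ, hμ] at hmul
    · rintro ⟨f, hfI, hfhom, hf0, hflm⟩
      exact ⟨μ, ⟨f, hfI, hf0, hflm⟩, le_refl μ⟩
  -- the lead-ideal side
  have hW : Submodule.restrictScalars K (leadIdeal I) ⊓ homogeneousSubmodule (Fin n) K d
      = Submodule.span K ((fun σ => monomial σ (1 : K)) '' L) := by
    apply le_antisymm
    · intro f hf
      obtain ⟨hf1, hf2⟩ := Submodule.mem_inf.mp hf
      have hf1' : f ∈ Ideal.span ((fun σ => monomial σ (1:K)) '' LMset) := hf1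
      have hsup := MvPolynomial.mem_ideal_span_monomial_image.mp hf1'
      rw [f.as_sum]
      refine Submodule.sum_mem _ (fun μ hμ => ?_)
      have hμd : mdeg μ = d := GlexAux.mdeg_of_hom hf2 (mem_support_iff.mp hμ)
      have hμL : μ ∈ L := (hkey μ hμd).mp (hsup μ hμ)
      have hmono : monomial μ (coeff μ f) = (coeff μ f) • monomial μ (1:K) := by
        rw [smul_monomial, smul_eq_mul, mul_one]
      rw [hmono]
      exact Submodule.smul_mem _ _ (Submodule.subset_span ⟨μ, hμL, rfl⟩)
    · rw [Submodule.span_le]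
      rintro x ⟨σ, hσL, rfl⟩
      rw [SetLike.mem_coe, Submodule.mem_inf]
      constructor
      · show monomial σ (1:K) ∈ leadIdeal I
        obtain ⟨f, hfI, hfhom, hf0, hflm⟩ := hσL
        exact Ideal.subset_span ⟨σ, ⟨f, hfI, hf0, hflm⟩, rfl⟩
      · rw [mem_homogeneousSubmodule]
        exact isHomogeneous_monomial _
          (by rw [← GlexAux.mdeg_eq_degree]; exact hLdeg σ hσL)
  have hcardW : Module.finrank K
      ↥(Submodule.restrictScalars K (leadIdeal I) ⊓ homogeneousSubmodule (Fin n) K d)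
      = Fintype.card ↥L := by
    rw [hW]
    have hli : LinearIndependent K (fun σ : ↥L => monomial (σ : Fin n →₀ ℕ) (1:K)) :=
      (MvPolynomial.basisMonomials (Fin n) K).linearIndependent.comp
        (fun σ : ↥L => (σ : Fin n →₀ ℕ)) Subtype.val_injective
    have hfr := finrank_span_eq_card hli
    rw [Set.image_eq_range]
    exact hfr
  -- the ideal side
  choose g hgI hghom hg0 hglm using fun σ : ↥L => σ.2
  have hgcoeff : ∀ σ : ↥L, coeff (σ : Fin n →₀ ℕ) (g σ) ≠ 0 := fun σ => (hglm σ).1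
  have hli : LinearIndependent K g := by
    rw [Fintype.linearIndependent_iff]
    intro c hc
    by_contra hcon
    push_neg at hcon
    obtain ⟨i1, hi1⟩ := hcon
    have hnon : ((Finset.univ.filter (fun i : ↥L => c i ≠ 0)).image
        (Subtype.val : ↥L → (Fin n →₀ ℕ))).Nonempty :=
      ⟨i1, Finset.mem_image.mpr ⟨i1, by simp [hi1], rfl⟩⟩
    obtain ⟨σ, hσmem, hσmax⟩ := GlexAux.finset_max _ hnon
    obtain ⟨i0, hi0mem, hi0⟩ := Finset.mem_image.mp hσmem
    have hi0c : c i0 ≠ 0 := by simpa using hi0mem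
    have hcoeffsum : coeff σ (∑ i, c i • g i) = c i0 * coeff σ (g i0) := by
      rw [coeff_sum]
      rw [Finset.sum_eq_single i0]
      · rw [coeff_smul, smul_eq_mul]
      · intro i _ hne
        rcases eq_or_ne (c i) 0 with h0 | h0
        · simp [h0]
        · have hmem : (i : Fin n →₀ ℕ) ∈ (Finset.univ.filter (fun i : ↥L => c i ≠ 0)).image
              (Subtype.val : ↥L → (Fin n →₀ ℕ)) := Finset.mem_image.mpr ⟨i, by simp [h0], rfl⟩
          have hle := hσmax _ hmem
          rcases eq_or_ne (coeff σ (g i)) 0 with hz | hz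
          · simp [coeff_smul, hz]
          · have hle2 := (hglm i).2 σ hz
            have heq : (i : Fin n →₀ ℕ) = σ := GlexAux.glexLe_antisymm hle hle2
            exact absurd (Subtype.ext (heq.trans hi0.symm)) hne
      · intro h; exact absurd (Finset.mem_univ i0) h
    rw [hc, coeff_zero] at hcoeffsum
    exact mul_ne_zero hi0c (hi0 ▸ hgcoeff i0) hcoeffsum.symm
  haveI : IsTrans (Fin n →₀ ℕ) glexLt := ⟨fun _ _ _ => GlexAux.glexLt_trans⟩
  haveI : IsIrrefl (Fin n →₀ ℕ) glexLt := ⟨GlexAux.glexLt_irrefl⟩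
  haveI : IsStrictOrder (Fin n →₀ ℕ) glexLt := ⟨⟩
  have hwf : WellFounded (fun a b : ↥{σ : Fin n →₀ ℕ | mdeg σ = d} => glexLt a.1 b.1) :=
    hT.wellFoundedOn (r := glexLt)
  have main : ∀ x : ↥{σ : Fin n →₀ ℕ | mdeg σ = d}, ∀ f, f ∈ I →
      f ∈ homogeneousSubmodule (Fin n) K d → IsLeadingMonomial f ↑x →
      f ∈ Submodule.span K (Set.range g) := by
    intro x
    induction x using hwf.induction with
    | _ x ih =>
    intro f hfI hfhom hflm
    have hf0 : f ≠ 0 := fun h0 => hflm.1 (by rw [h0]; simp)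
    have hxL : (x : Fin n →₀ ℕ) ∈ L := ⟨f, hfI, hfhom, hf0, hflm⟩
    set i : ↥L := ⟨(x : Fin n →₀ ℕ), hxL⟩ with hidef
    set c : K := coeff (x : Fin n →₀ ℕ) f / coeff (x : Fin n →₀ ℕ) (g i) with hcdef
    set f' := f - c • g i with hf'def
    have hgix : coeff (x : Fin n →₀ ℕ) (g i) ≠ 0 := hgcoeff i
    have hcoeffx : coeff (x : Fin n →₀ ℕ) f' = 0 := by
      rw [hf'def, coeff_sub, coeff_smul, smul_eq_mul, hcdef, div_mul_cancel₀ _ hgix, sub_self]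
    have hf'I : f' ∈ I := by
      rw [hf'def]
      exact I.sub_mem hfI (by rw [smul_eq_C_mul]; exact I.mul_mem_left _ (hgI i))
    have hf'hom : f' ∈ homogeneousSubmodule (Fin n) K d :=
      Submodule.sub_mem _ hfhom (Submodule.smul_mem _ _ (hghom i))
    rcases eq_or_ne f' 0 with hz | hz
    · have heq : f = c • g i := by rwa [hf'def, sub_eq_zero] at hz
      rw [heq]
      exact Submodule.smul_mem _ _ (Submodule.subset_span ⟨i, rfl⟩)
    · obtain ⟨τ, hτlm⟩ := GlexAux.exists_LM hz
      have hτle : glexLe τ ↑x := by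
        have hτc := hτlm.1
        rcases eq_or_ne (coeff τ f) 0 with h1 | h1
        · have h2 : coeff τ (g i) ≠ 0 := by
            intro h2
            apply hτc
            rw [hf'def, coeff_sub, coeff_smul, h1, h2, smul_zero, sub_zero]
          exact (hglm i).2 τ h2
        · exact hflm.2 τ h1
      have hτne : τ ≠ ↑x := fun h => hτlm.1 (h ▸ hcoeffx)
      have hτlt : glexLt τ ↑x := by
        rcases hτle with h | h
        exacts [absurd h hτne, h]
      have hτT : mdeg τ = d := GlexAux.mdeg_of_hom hf'hom hτlm.1
      have hf'span := ih ⟨τ, hτT⟩ hτlt f' hf'I hf'hom hτlm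
      have heq : f = f' + c • g i := by rw [hf'def, sub_add_cancel]
      rw [heq]
      exact Submodule.add_mem _ hf'span
        (Submodule.smul_mem _ _ (Submodule.subset_span ⟨i, rfl⟩))
  have hspan : ∀ v : ↥(Submodule.restrictScalars K I ⊓ homogeneousSubmodule (Fin n) K d),
      (v : MvPolynomial (Fin n) K) ∈ Submodule.span K (Set.range g) := by
    intro v
    obtain ⟨hv1, hv2⟩ := Submodule.mem_inf.mp v.2
    rcases eq_or_ne (v : MvPolynomial (Fin n) K) 0 with h0 | h0
    · rw [h0]; exact Submodule.zero_mem _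
    · obtain ⟨σ, hσ⟩ := GlexAux.exists_LM h0
      exact main ⟨σ, GlexAux.mdeg_of_hom hv2 hσ.1⟩ _ hv1 hv2 hσ
  set V := Submodule.restrictScalars K I ⊓ homogeneousSubmodule (Fin n) K d with hVdef
  set g2 : ↥L → ↥V := fun σ => ⟨g σ, Submodule.mem_inf.mpr ⟨hgI σ, hghom σ⟩⟩ with hg2def
  have hliV : LinearIndependent K g2 :=
    LinearIndependent.of_comp V.subtype hli
  have htop : ⊤ ≤ Submodule.span K (Set.range g2) := by
    intro v _
    have hv := hspan v
    have hrange : Set.range g = V.subtype '' Set.range g2 := by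
      rw [← Set.range_comp]; rfl
    rw [hrange, ← Submodule.map_span] at hv
    obtain ⟨w, hw, hwv⟩ := Submodule.mem_map.mp hv
    have hweq : w = v := Subtype.ext hwv
    rwa [← hweq]
  have hbasis : Module.Basis ↥L K ↥V := Module.Basis.mk hliV htop
  rw [Module.finrank_eq_card_basis hbasis, hcardW]
end

section
/- Let L be a lexideal in S = K[X_1,...,X_n] containing no power of X_n, let G be its minimal system of monomial generators, and let L̂ be the ideal generated by the binomials {v − φ(v) : v ∈ G}. Then for every monomial u of S there exists a monomial w ∉ L such that u ≡ w (mod L̂); equivalently, the image of the set of all monomials in S/L̂ equals the image of the set of monomials not in L. -/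
/-- The map `φ : u ↦ u·X_n/X_{min(u)}` on nonconstant monomials, where `min(u)` is the
least index of a variable dividing `u` (and `X_n` is the last variable). On the zero
exponent vector (the monomial `1`), `φ` is the identity by convention. -/
noncomputable def phi {n : ℕ} (hn : 0 < n) (σ : Fin n →₀ ℕ) : Fin n →₀ ℕ :=
  if h : σ.support.Nonempty then
    σ - Finsupp.single (σ.support.min' h) 1 + Finsupp.single ⟨n - 1, Nat.sub_lt hn Nat.one_pos⟩ 1
  else σ

/-- The minimal system of monomial generators of a monomial ideal `L`: the monomials of
`L` that are not of the form `X_j·w` with `w` a monomial of `L`. -/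
def minGens {K : Type*} [Field K] {n : ℕ} (L : Ideal (MvPolynomial (Fin n) K)) :
    Set (Fin n →₀ ℕ) :=
  {σ | MvPolynomial.monomial σ (1 : K) ∈ L ∧
    ¬ ∃ (j : Fin n) (τ : Fin n →₀ ℕ),
        MvPolynomial.monomial τ (1 : K) ∈ L ∧ σ = τ + Finsupp.single j 1}

/-!
Replacing a minimal generator `v` by `φ(v)` moves one unit of exponent from `X_{min(v)}` to
`X_n`, so it lowers the weight `∑ j, σ j * (n - 1 - j)` unless `v` is a power of `X_n`, which
`L` does not contain. Rewriting a monomial `v * w` of `L` as `φ(v) * w` modulo `L̂` therefore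
terminates, and it can only stop at a monomial outside `L`.
-/

open MvPolynomial Finsupp

section

variable {n : ℕ}

def lastVar (hn : 0 < n) : Fin n := ⟨n - 1, Nat.sub_lt hn Nat.one_pos⟩

noncomputable def distToLastWeight (n : ℕ) : (Fin n →₀ ℕ) →+ ℕ :=
  weight fun j : Fin n => n - 1 - (j : ℕ)

theorem distToLastWeight_single (j : Fin n) (k : ℕ) :
    distToLastWeight n (single j k) = k * (n - 1 - j) :=
  weight_single _ j k

theorem phi_add_single_min' (hn : 0 < n) (v : Fin n →₀ ℕ) (h : v.support.Nonempty) :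
    phi hn v + single (v.support.min' h) 1 = v + single (lastVar hn) 1 := by
  have hle : single (v.support.min' h) 1 ≤ v :=
    single_le_iff.mpr (Nat.one_le_iff_ne_zero.mpr (mem_support_iff.mp (v.support.min'_mem h)))
  rw [phi, dif_pos h, add_right_comm, tsub_add_cancel_of_le hle]
  rfl

theorem eq_single_lastVar_of_support_min'_eq (hn : 0 < n) (v : Fin n →₀ ℕ)
    (h : v.support.Nonempty) (hmin : v.support.min' h = lastVar hn) :
    ∃ k, v = single (lastVar hn) k := by
  refine support_subset_singleton'.mp fun i hi => Finset.mem_singleton.mpr ?_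
  have hle := hmin ▸ v.support.min'_le i hi
  exact le_antisymm (Fin.le_def.mpr (Nat.le_sub_one_of_lt i.isLt)) hle

theorem distToLastWeight_phi_lt (hn : 0 < n) (v : Fin n →₀ ℕ)
    (hv : ∀ k, v ≠ single (lastVar hn) k) :
    distToLastWeight n (phi hn v) < distToLastWeight n v := by
  have h : v.support.Nonempty := by
    rw [support_nonempty_iff]
    rintro rfl
    exact hv 0 (single_zero _).symm
  set m := v.support.min' h
  have hm : m.val < n - 1 := by
    refine lt_of_le_of_ne (Nat.le_sub_one_of_lt m.isLt) fun hlast => ?_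
    obtain ⟨k, hk⟩ := eq_single_lastVar_of_support_min'_eq hn v h (Fin.ext hlast)
    exact hv k hk
  have hw := congrArg (distToLastWeight n) (phi_add_single_min' hn v h)
  rw [map_add, map_add, distToLastWeight_single, distToLastWeight_single] at hw
  simp only [lastVar] at hw
  omega

theorem exists_minGens_add {K : Type*} [Field K] (L : Ideal (MvPolynomial (Fin n) K))
    (σ : Fin n →₀ ℕ) (hσ : monomial σ (1 : K) ∈ L) :
    ∃ v ∈ minGens L, ∃ w, σ = v + w := by
  induction σ using WellFoundedLT.induction with
  | _ σ ih =>
  by_cases hmin : σ ∈ minGens L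
  · exact ⟨σ, hmin, 0, (add_zero σ).symm⟩
  obtain ⟨j, τ, hτ, rfl⟩ : ∃ (j : Fin n) (τ : Fin n →₀ ℕ),
      monomial τ (1 : K) ∈ L ∧ σ = τ + single j 1 := by
    by_contra hne
    exact hmin ⟨hσ, hne⟩
  have hlt : τ < τ + single j 1 := lt_add_of_pos_right τ (pos_iff_ne_zero.mpr (by simp))
  obtain ⟨v, hv, w, rfl⟩ := ih τ hlt hτ
  exact ⟨v, hv, w + single j 1, add_assoc v w _⟩

/-- The ideal `L̂` of the statement. -/
noncomputable def phiBinomialIdeal {K : Type*} [Field K] (hn : 0 < n)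
    (L : Ideal (MvPolynomial (Fin n) K)) : Ideal (MvPolynomial (Fin n) K) :=
  Ideal.span ((fun v => monomial v (1 : K) - monomial (phi hn v) (1 : K)) '' minGens L)

theorem monomial_add_sub_monomial_phi_add_mem {K : Type*} [Field K] (hn : 0 < n)
    {L : Ideal (MvPolynomial (Fin n) K)} {v : Fin n →₀ ℕ} (hv : v ∈ minGens L)
    (w : Fin n →₀ ℕ) :
    monomial (v + w) (1 : K) - monomial (phi hn v + w) 1 ∈ phiBinomialIdeal hn L := by
  have hfactor : monomial (v + w) (1 : K) - monomial (phi hn v + w) 1 =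
      monomial w 1 * (monomial v 1 - monomial (phi hn v) 1) := by
    rw [mul_sub, monomial_mul, monomial_mul, one_mul, add_comm w, add_comm w]
  rw [hfactor]
  exact Ideal.mul_mem_left _ _ (Ideal.subset_span ⟨v, hv, rfl⟩)

end

theorem stmt15_general (K : Type*) [Field K] (n : ℕ) (hn : 0 < n)
    (L : Ideal (MvPolynomial (Fin n) K))
    (hXn : ∀ k : ℕ,
      (MvPolynomial.X (⟨n - 1, Nat.sub_lt hn Nat.one_pos⟩ : Fin n) : MvPolynomial (Fin n) K) ^ k
        ∉ L) :
    ∀ σ : Fin n →₀ ℕ, ∃ τ : Fin n →₀ ℕ,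
      MvPolynomial.monomial τ (1 : K) ∉ L ∧
      MvPolynomial.monomial σ (1 : K) - MvPolynomial.monomial τ (1 : K) ∈
        Ideal.span ((fun v => MvPolynomial.monomial v (1 : K)
          - MvPolynomial.monomial (phi hn v) (1 : K)) '' minGens L) := by
  intro σ
  induction h : distToLastWeight n σ using Nat.strong_induction_on generalizing σ with
  | _ N ih =>
  by_cases hσ : monomial σ (1 : K) ∉ L
  · exact ⟨σ, hσ, by simp⟩
  obtain ⟨v, hv, w, rfl⟩ := exists_minGens_add L σ (not_not.mp hσ)
  have hv_ne : ∀ k, v ≠ single (lastVar hn) k := by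
    rintro k rfl
    exact hXn k (by rw [X_pow_eq_monomial]; exact hv.1)
  have hlt : distToLastWeight n (phi hn v + w) < N := by
    rw [← h, map_add, map_add]
    exact Nat.add_lt_add_right (distToLastWeight_phi_lt hn v hv_ne) _
  obtain ⟨τ, hτ, hmem⟩ := ih _ hlt (phi hn v + w) rfl
  refine ⟨τ, hτ, ?_⟩
  have hsum := Ideal.add_mem _ (monomial_add_sub_monomial_phi_add_mem hn hv w) hmem
  rwa [sub_add_sub_cancel] at hsum

/-- Let `L` be a lexideal in `S = K[X_1,…,X_n]` containing no power of `X_n`, let `G` be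
the minimal system of monomial generators of `L`, and `L̂` the ideal generated by the
binomials `{v − φ(v) : v ∈ G}`. Then for every monomial `u` of `S` there exists a
monomial `w ∉ L` with `u ≡ w (mod L̂)`, i.e. `u − w ∈ L̂`; equivalently, the image of
the set of all monomials in `S/L̂` equals the image of the set of monomials not in `L`. -/
theorem stmt15 (K : Type*) [Field K] (n : ℕ) (hn : 0 < n)
    (L : Ideal (MvPolynomial (Fin n) K)) (hlex : IsLexIdeal L)
    (hXn : ∀ k : ℕ,
      (MvPolynomial.X (⟨n - 1, Nat.sub_lt hn Nat.one_pos⟩ : Fin n) : MvPolynomial (Fin n) K) ^ k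
        ∉ L) :
    ∀ σ : Fin n →₀ ℕ, ∃ τ : Fin n →₀ ℕ,
      MvPolynomial.monomial τ (1 : K) ∉ L ∧
      MvPolynomial.monomial σ (1 : K) - MvPolynomial.monomial τ (1 : K) ∈
        Ideal.span ((fun v => MvPolynomial.monomial v (1 : K)
          - MvPolynomial.monomial (phi hn v) (1 : K)) '' minGens L) :=
  stmt15_general K n hn L hXn
end
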